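/- arXiv:1304.2994 — 9 statements merged into one kernel-verified Lean document; each statement's English description precedes it below -/
import Mathlib

section
/- Suppose OMD is run with regularizers f_1,…,f_T defined on a common convex domain S ⊆ ℝ^d, where each f_t is β_t-strongly convex with respect to a norm ‖·‖_t whose dual norm is ‖·‖_{*,t}, on an arbitrary input sequence z_1,…,z_T ∈ ℝ^d, producing θ_1 = 0, w_t = ∇f_t*(θ_t), θ_{t+1} = θ_t + z_t. Then for every u ∈ S: Σ_{t=1}^T ⟨z_t, u − w_t⟩ ≤ f_T(u) + Σ_{t=1}^T ( ‖z_t‖_{*,t}²/(2β_t) + f_t*(θ_t) − f_{t−1}*(θ_t) ), where by convention f_0*(θ_1) = f_0*(0) = 0. -/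
open Finset Matrix
open scoped BigOperators

noncomputable section

/-- `N` is a norm on `ℝ^d`. -/
def IsNorm {d : ℕ} (N : (Fin d → ℝ) → ℝ) : Prop :=
  (∀ x, N x = 0 ↔ x = 0) ∧ (∀ (c : ℝ) (x), N (c • x) = |c| * N x) ∧
    (∀ x y, N (x + y) ≤ N x + N y)

/-- Dual norm `‖θ‖_* = sup {⟨u,θ⟩ : ‖u‖ ≤ 1}`. -/
def dualNorm {d : ℕ} (N : (Fin d → ℝ) → ℝ) (θ : Fin d → ℝ) : ℝ :=
  sSup {r | ∃ u, N u ≤ 1 ∧ r = u ⬝ᵥ θ}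

/-- `g` is a subgradient of `f` at `u` relative to the domain `S`. -/
def IsSubgradAt {d : ℕ} (S : Set (Fin d → ℝ)) (f : (Fin d → ℝ) → ℝ)
    (g u : Fin d → ℝ) : Prop :=
  ∀ v ∈ S, f v ≥ f u + g ⬝ᵥ (v - u)

/-- `f` is `β`-strongly convex on `S` with respect to the norm `N`. -/
def StrongConvexOnWith {d : ℕ} (S : Set (Fin d → ℝ)) (β : ℝ)
    (N : (Fin d → ℝ) → ℝ) (f : (Fin d → ℝ) → ℝ) : Prop :=
  ∀ u ∈ S, ∀ v ∈ S, ∀ g, IsSubgradAt S f g u →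
    f v ≥ f u + g ⬝ᵥ (v - u) + β / 2 * (N (u - v)) ^ 2

/-- Fenchel conjugate of `f` with domain `S`: `f*(θ) = sup_{v∈S} (⟨v,θ⟩ - f v)`. -/
def fenchel {d : ℕ} (S : Set (Fin d → ℝ)) (f : (Fin d → ℝ) → ℝ)
    (θ : Fin d → ℝ) : ℝ :=
  sSup {r | ∃ v ∈ S, r = v ⬝ᵥ θ - f v}

/-!
Strong convexity of `f_t` makes its conjugate smooth along the OMD step: since `w_t` maximizes
`⟨v, θ_t⟩ - f_t v`, strong convexity at `w_t`, the dual-norm Cauchy–Schwarz inequality and AM–GM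
give `f_t*(θ_t + z_t) ≤ f_t*(θ_t) + ⟨w_t, z_t⟩ + ‖z_t‖²_{*,t} / (2 β_t)`. Summing over `t`, the
terms `f_t*(θ_{t+1}) - f_{t-1}*(θ_t)` telescope to `f_T*(θ_{T+1})`, and the Fenchel–Young
inequality `⟨u, θ_{T+1}⟩ - f_T u ≤ f_T*(θ_{T+1})` with `θ_{T+1} = ∑ z_t` yields the bound.
-/

namespace IsNorm

variable {d : ℕ} {N : (Fin d → ℝ) → ℝ}

theorem map_zero (hN : IsNorm N) : N 0 = 0 := (hN.1 0).2 rfl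

theorem map_neg (hN : IsNorm N) (x : Fin d → ℝ) : N (-x) = N x := by
  simpa using hN.2.1 (-1) x

theorem map_sub_rev (hN : IsNorm N) (x y : Fin d → ℝ) : N (x - y) = N (y - x) := by
  rw [← hN.map_neg, neg_sub]

theorem nonneg (hN : IsNorm N) (x : Fin d → ℝ) : 0 ≤ N x := by
  have h := hN.2.2 x (-x)
  rw [add_neg_cancel, hN.map_zero, hN.map_neg] at h
  linarith

theorem pos (hN : IsNorm N) {x : Fin d → ℝ} (hx : x ≠ 0) : 0 < N x :=
  (hN.nonneg x).lt_of_ne fun h => hx ((hN.1 x).1 h.symm)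

theorem map_sum_le (hN : IsNorm N) {ι : Type*} (s : Finset ι) (g : ι → Fin d → ℝ) :
    N (∑ i ∈ s, g i) ≤ ∑ i ∈ s, N (g i) := by
  classical
  induction s using Finset.induction_on with
  | empty => simp [hN.map_zero]
  | insert a s ha ih =>
    rw [sum_insert ha, sum_insert ha]
    exact (hN.2.2 _ _).trans (by linarith)

theorem le_const_mul_norm (hN : IsNorm N) : ∃ C, ∀ x, N x ≤ C * ‖x‖ := by
  classical
  set e : Fin d → Fin d → ℝ := fun i j => if i = j then 1 else 0
  refine ⟨∑ i, N (e i), fun x => ?_⟩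
  calc N x = N (∑ i, x i • e i) := by rw [← pi_eq_sum_univ x]
    _ ≤ ∑ i, N (x i • e i) := hN.map_sum_le _ _
    _ ≤ ∑ i, ‖x‖ * N (e i) := by
      gcongr with i
      rw [hN.2.1, ← Real.norm_eq_abs]
      exact mul_le_mul_of_nonneg_right (norm_le_pi_norm x i) (hN.nonneg _)
    _ = (∑ i, N (e i)) * ‖x‖ := by rw [← mul_sum, mul_comm]

theorem continuous (hN : IsNorm N) : Continuous N := by
  obtain ⟨C, hC⟩ := hN.le_const_mul_norm
  refine (LipschitzWith.of_le_add_mul' C fun x y => ?_).continuous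
  calc N x = N (x - y + y) := by rw [sub_add_cancel]
    _ ≤ N y + N (x - y) := by linarith [hN.2.2 (x - y) y]
    _ ≤ N y + C * dist x y := by rw [dist_eq_norm]; linarith [hC (x - y)]

theorem exists_pos_mul_norm_le (hN : IsNorm N) : ∃ c > 0, ∀ x, c * ‖x‖ ≤ N x := by
  have hsphere : ∃ c > 0, ∀ y ∈ Metric.sphere (0 : Fin d → ℝ) 1, c ≤ N y := by
    rcases (Metric.sphere (0 : Fin d → ℝ) 1).eq_empty_or_nonempty with h | hne
    · exact ⟨1, one_pos, by simp [h]⟩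
    obtain ⟨y₀, hy₀, hmin⟩ :=
      (isCompact_sphere 0 1).exists_isMinOn hne hN.continuous.continuousOn
    refine ⟨N y₀, hN.pos (ne_zero_of_mem_unit_sphere ⟨y₀, hy₀⟩), fun y hy => hmin hy⟩
  obtain ⟨c, hc, hcN⟩ := hsphere
  refine ⟨c, hc, fun x => ?_⟩
  rcases eq_or_ne x 0 with rfl | hx
  · simp [hN.map_zero]
  have hxpos : 0 < ‖x‖ := norm_pos_iff.2 hx
  have h := hcN (‖x‖⁻¹ • x) (by simp [norm_smul, hxpos.ne'])
  rw [hN.2.1, abs_of_pos (inv_pos.2 hxpos), le_inv_mul_iff₀ hxpos] at h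
  linarith

theorem bddAbove_dual (hN : IsNorm N) (θ : Fin d → ℝ) :
    BddAbove {r | ∃ u, N u ≤ 1 ∧ r = u ⬝ᵥ θ} := by
  obtain ⟨c, hc, hcN⟩ := hN.exists_pos_mul_norm_le
  refine ((isCompact_closedBall (0 : Fin d → ℝ) c⁻¹).bddAbove_image
    (f := fun u => u ⬝ᵥ θ) (by fun_prop)).mono ?_
  rintro r ⟨u, hu, rfl⟩
  refine ⟨u, ?_, rfl⟩
  rw [mem_closedBall_zero_iff, ← mul_one c⁻¹, le_inv_mul_iff₀ hc]
  exact (hcN u).trans hu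

theorem dotProduct_le_mul_dualNorm (hN : IsNorm N) (x θ : Fin d → ℝ) :
    x ⬝ᵥ θ ≤ N x * dualNorm N θ := by
  rcases eq_or_ne x 0 with rfl | hx
  · simp [hN.map_zero]
  have hpos := hN.pos hx
  have hunit : (N x)⁻¹ • x ⬝ᵥ θ ≤ dualNorm N θ := by
    refine le_csSup (hN.bddAbove_dual θ) ⟨(N x)⁻¹ • x, ?_, rfl⟩
    rw [hN.2.1, abs_of_pos (inv_pos.2 hpos), inv_mul_cancel₀ hpos.ne']
  rwa [smul_dotProduct, smul_eq_mul, inv_mul_le_iff₀ hpos] at hunit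

end IsNorm

section Fenchel

variable {d : ℕ} {S : Set (Fin d → ℝ)} {f : (Fin d → ℝ) → ℝ} {θ w : Fin d → ℝ}

theorem le_fenchel {B : ℝ} (hB : ∀ v ∈ S, v ⬝ᵥ θ - f v ≤ B) {u : Fin d → ℝ} (hu : u ∈ S) :
    u ⬝ᵥ θ - f u ≤ fenchel S f θ :=
  le_csSup ⟨B, by rintro r ⟨v, hv, rfl⟩; exact hB v hv⟩ ⟨u, hu, rfl⟩

theorem fenchel_le (hS : S.Nonempty) {B : ℝ} (hB : ∀ v ∈ S, v ⬝ᵥ θ - f v ≤ B) :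
    fenchel S f θ ≤ B :=
  csSup_le (hS.elim fun v hv => ⟨_, v, hv, rfl⟩) (by rintro r ⟨v, hv, rfl⟩; exact hB v hv)

theorem IsMaxOn.fenchel_eq (hw : w ∈ S) (hmax : IsMaxOn (fun v => v ⬝ᵥ θ - f v) S w) :
    fenchel S f θ = w ⬝ᵥ θ - f w :=
  le_antisymm (fenchel_le ⟨w, hw⟩ fun _ hv => hmax hv) (le_fenchel (fun _ hv => hmax hv) hw)

theorem fenchel_zero_zero (hS : S.Nonempty) : fenchel S (fun _ => 0) 0 = 0 := by
  obtain ⟨w, hw⟩ := hS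
  rw [IsMaxOn.fenchel_eq (f := fun _ => 0) hw fun _ _ => by simp]
  simp

theorem IsMaxOn.isSubgradAt (hmax : IsMaxOn (fun v => v ⬝ᵥ θ - f v) S w) :
    IsSubgradAt S f θ w := fun v hv => by
  have h : v ⬝ᵥ θ - f v ≤ w ⬝ᵥ θ - f w := hmax hv
  rw [dotProduct_sub, dotProduct_comm θ, dotProduct_comm θ]
  linarith

variable {β : ℝ} {N : (Fin d → ℝ) → ℝ}

theorem StrongConvexOnWith.dotProduct_add_sub_le (hf : StrongConvexOnWith S β N f)
    (hN : IsNorm N) (hβ : 0 < β) (hw : w ∈ S) (hmax : IsMaxOn (fun v => v ⬝ᵥ θ - f v) S w)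
    (z : Fin d → ℝ) {v : Fin d → ℝ} (hv : v ∈ S) :
    v ⬝ᵥ (θ + z) - f v ≤ w ⬝ᵥ θ - f w + w ⬝ᵥ z + dualNorm N z ^ 2 / (2 * β) := by
  have hsc := hf w hw v hv θ hmax.isSubgradAt
  have hpair := hN.dotProduct_le_mul_dualNorm (v - w) z
  have hamgm : N (v - w) * dualNorm N z - β / 2 * N (v - w) ^ 2 ≤
      dualNorm N z ^ 2 / (2 * β) := by
    rw [le_div_iff₀ (by positivity)]
    nlinarith [sq_nonneg (dualNorm N z - β * N (v - w))]
  rw [hN.map_sub_rev, dotProduct_sub, dotProduct_comm θ, dotProduct_comm θ] at hsc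
  rw [sub_dotProduct] at hpair
  rw [dotProduct_add]
  linarith

theorem StrongConvexOnWith.fenchel_add_le (hf : StrongConvexOnWith S β N f)
    (hN : IsNorm N) (hβ : 0 < β) (hw : w ∈ S) (hmax : IsMaxOn (fun v => v ⬝ᵥ θ - f v) S w)
    (z : Fin d → ℝ) :
    fenchel S f (θ + z) ≤ fenchel S f θ + w ⬝ᵥ z + dualNorm N z ^ 2 / (2 * β) := by
  rw [hmax.fenchel_eq hw]
  exact fenchel_le ⟨w, hw⟩ fun v hv => hf.dotProduct_add_sub_le hN hβ hw hmax z hv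

end Fenchel

theorem eq_sum_Icc_of_succ_eq_add {M : Type*} [AddCommMonoid M] {T : ℕ} {θ z : ℕ → M}
    (h1 : θ 1 = 0) (hθ : ∀ t ∈ Icc 1 T, θ (t + 1) = θ t + z t) :
    θ (T + 1) = ∑ t ∈ Icc 1 T, z t := by
  induction T with
  | zero => simpa using h1
  | succ T ih =>
    rw [sum_Icc_succ_top (by omega), ← ih fun t ht => hθ t (Icc_subset_Icc_right (by omega) ht),
      hθ _ (by simp)]

theorem sum_Icc_sub_pred {M : Type*} [AddCommGroup M] (G : ℕ → M) (T : ℕ) :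
    ∑ t ∈ Icc 1 T, (G t - G (t - 1)) = G T - G 0 := by
  induction T with
  | zero => simp
  | succ T ih =>
    rw [sum_Icc_succ_top (by omega), ih, Nat.add_sub_cancel]
    abel

theorem fenchel_eq_sum_Icc_sub {d : ℕ} {S : Set (Fin d → ℝ)} (hS : S.Nonempty)
    {f : ℕ → (Fin d → ℝ) → ℝ} (hf0 : ∀ v, f 0 v = 0) {θ : ℕ → Fin d → ℝ} (hθ1 : θ 1 = 0)
    (T : ℕ) :
    fenchel S (f T) (θ (T + 1)) =
      ∑ t ∈ Icc 1 T, (fenchel S (f t) (θ (t + 1)) - fenchel S (f (t - 1)) (θ t)) := by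
  have hstart : fenchel S (f 0) (θ 1) = 0 := by
    rw [funext hf0, hθ1, fenchel_zero_zero hS]
  have hsum := sum_Icc_sub_pred (fun t => fenchel S (f t) (θ (t + 1))) T
  rw [zero_add, hstart, sub_zero] at hsum
  rw [← hsum]
  exact sum_congr rfl fun t ht => by rw [Nat.sub_add_cancel (mem_Icc.1 ht).1]

theorem stmt_0_general {d T : ℕ}
    (S : Set (Fin d → ℝ)) (hSne : S.Nonempty)
    (f : ℕ → (Fin d → ℝ) → ℝ) (hf0 : ∀ v, f 0 v = 0)
    (β : ℕ → ℝ) (hβ : ∀ t ∈ Icc 1 T, 0 < β t)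
    (N : ℕ → (Fin d → ℝ) → ℝ) (hN : ∀ t ∈ Icc 1 T, IsNorm (N t))
    (hstrong : ∀ t ∈ Icc 1 T, StrongConvexOnWith S (β t) (N t) (f t))
    (z θ w : ℕ → Fin d → ℝ)
    (hθ1 : θ 1 = 0)
    (hθ : ∀ t ∈ Icc 1 T, θ (t + 1) = θ t + z t)
    (hwmem : ∀ t ∈ Icc 1 T, w t ∈ S)
    (hwmax : ∀ t ∈ Icc 1 T, ∀ v ∈ S,
      v ⬝ᵥ θ t - f t v ≤ w t ⬝ᵥ θ t - f t (w t)) :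
    ∀ u ∈ S,
      ∑ t ∈ Icc 1 T, z t ⬝ᵥ (u - w t) ≤
        f T u + ∑ t ∈ Icc 1 T,
          (dualNorm (N t) (z t) ^ 2 / (2 * β t)
            + fenchel S (f t) (θ t) - fenchel S (f (t - 1)) (θ t)) := by
  intro u hu
  obtain rfl | hT := Nat.eq_zero_or_pos T
  · simp [hf0]
  have hmax : ∀ t ∈ Icc 1 T, IsMaxOn (fun v => v ⬝ᵥ θ t - f t v) S (w t) :=
    fun t ht _ hv => hwmax t ht _ hv
  have hstep : ∀ t ∈ Icc 1 T, fenchel S (f t) (θ (t + 1)) ≤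
      fenchel S (f t) (θ t) + w t ⬝ᵥ z t + dualNorm (N t) (z t) ^ 2 / (2 * β t) := fun t ht => by
    rw [hθ t ht]
    exact (hstrong t ht).fenchel_add_le (hN t ht) (hβ t ht) (hwmem t ht) (hmax t ht) (z t)
  have hTmem : T ∈ Icc 1 T := mem_Icc.2 ⟨hT, le_rfl⟩
  have hyoung : u ⬝ᵥ θ (T + 1) - f T u ≤ fenchel S (f T) (θ (T + 1)) := by
    rw [hθ T hTmem]
    exact le_fenchel (fun v hv => (hstrong T hTmem).dotProduct_add_sub_le (hN T hTmem)
      (hβ T hTmem) (hwmem T hTmem) (hmax T hTmem) (z T) hv) hu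
  have htel := fenchel_eq_sum_Icc_sub hSne hf0 hθ1 T
  calc ∑ t ∈ Icc 1 T, z t ⬝ᵥ (u - w t)
      = u ⬝ᵥ θ (T + 1) - ∑ t ∈ Icc 1 T, w t ⬝ᵥ z t := by
        rw [eq_sum_Icc_of_succ_eq_add hθ1 hθ, dotProduct_sum, ← sum_sub_distrib]
        exact sum_congr rfl fun t _ => by
          rw [dotProduct_sub, dotProduct_comm u, dotProduct_comm (w t)]
    _ ≤ f T u + ∑ t ∈ Icc 1 T,
          (fenchel S (f t) (θ (t + 1)) - fenchel S (f (t - 1)) (θ t) - w t ⬝ᵥ z t) := by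
        rw [sum_sub_distrib, ← htel]
        linarith
    _ ≤ _ := by
        refine add_le_add_right (sum_le_sum fun t ht => ?_) _
        linarith [hstep t ht]

/-- Lemma 1, first part: the fundamental regret inequality for
Online Mirror Descent with time-varying regularizers.  Here `w t` is encoded as
`∇f_t*(θ_t)`, i.e. the maximizer over `S` of `v ↦ ⟨v, θ_t⟩ - f_t v`, and the
convention `f_0* (0) = 0` is realized by `f 0 = 0` (so that
`fenchel S (f 0) (θ 1) = 0` since `θ 1 = 0` and `S` is nonempty). -/
theorem stmt_0 {d T : ℕ}
    (S : Set (Fin d → ℝ)) (hS : Convex ℝ S) (hSne : S.Nonempty)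
    (f : ℕ → (Fin d → ℝ) → ℝ) (hf0 : ∀ v, f 0 v = 0)
    (β : ℕ → ℝ) (hβ : ∀ t ∈ Icc 1 T, 0 < β t)
    (N : ℕ → (Fin d → ℝ) → ℝ) (hN : ∀ t ∈ Icc 1 T, IsNorm (N t))
    (hstrong : ∀ t ∈ Icc 1 T, StrongConvexOnWith S (β t) (N t) (f t))
    (z θ w : ℕ → Fin d → ℝ)
    (hθ1 : θ 1 = 0)
    (hθ : ∀ t ∈ Icc 1 T, θ (t + 1) = θ t + z t)
    (hwmem : ∀ t ∈ Icc 1 T, w t ∈ S)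
    (hwmax : ∀ t ∈ Icc 1 T, ∀ v ∈ S,
      v ⬝ᵥ θ t - f t v ≤ w t ⬝ᵥ θ t - f t (w t)) :
    ∀ u ∈ S,
      ∑ t ∈ Icc 1 T, z t ⬝ᵥ (u - w t) ≤
        f T u + ∑ t ∈ Icc 1 T,
          (dualNorm (N t) (z t) ^ 2 / (2 * β t)
            + fenchel S (f t) (θ t) - fenchel S (f (t - 1)) (θ t)) :=
  stmt_0_general S hSne f hf0 β hβ N hN hstrong z θ w hθ1 hθ hwmem hwmax
end
end

section
/- Let a_1,…,a_d > 0 and q ∈ (1,2], and define f : ℝ^d → ℝ by f(w) = (1/(2(q−1))) · (Σ_{i=1}^d |w_i|^q a_i)^{2/q}. Then the Fenchel conjugate of f is f*(θ) = (1/(2(p−1))) · (Σ_{i=1}^d |θ_i|^p a_i^{1−p})^{2/p}, where p = q/(q−1). -/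
/-!
Hölder's inequality, applied to `v i * a i ^ (1 / q)` and `θ i * a i ^ (-1 / q)`, bounds `⟨v, θ⟩` by
`‖v‖ * ‖θ‖⋆`, where `‖v‖ ^ q = ∑ |v i| ^ q * a i` and `‖θ‖⋆ ^ p = ∑ |θ i| ^ p * a i ^ (1 - p)`.
The scalar Fenchel–Young inequality `u * m - u ^ 2 / (2 * w) ≤ w * m ^ 2 / 2` with `w = q - 1`
then gives `⟨v, θ⟩ - f v ≤ (q - 1) / 2 * ‖θ‖⋆ ^ 2`, and `(q - 1) / 2 = 1 / (2 * (p - 1))`.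
Equality holds at a nonnegative multiple of `θ i * |θ i| ^ (p - 2) * a i ^ (1 - p)`, the vector
for which Hölder's inequality is tight.
-/

open Finset Real

section

variable {ι : Type*} [Fintype ι]

noncomputable def weightedPowSum (a : ι → ℝ) (r : ℝ) (x : ι → ℝ) : ℝ := ∑ i, |x i| ^ r * a i

lemma weightedPowSum_nonneg {a : ι → ℝ} (ha : ∀ i, 0 ≤ a i) (r : ℝ) (x : ι → ℝ) :
    0 ≤ weightedPowSum a r x :=
  sum_nonneg fun i _ => mul_nonneg (rpow_nonneg (abs_nonneg _) _) (ha i)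

lemma weightedPowSum_smul (a : ι → ℝ) (r : ℝ) {c : ℝ} (hc : 0 ≤ c) (x : ι → ℝ) :
    weightedPowSum a r (c • x) = c ^ r * weightedPowSum a r x := by
  simp only [weightedPowSum, mul_sum, Pi.smul_apply, smul_eq_mul, abs_mul, abs_of_nonneg hc,
    mul_rpow hc (abs_nonneg _), mul_assoc]

lemma abs_mul_rpow_rpow (x : ℝ) {b : ℝ} (hb : 0 < b) (s r : ℝ) :
    |x * b ^ s| ^ r = |x| ^ r * b ^ (s * r) := by
  rw [abs_mul, abs_of_pos (rpow_pos_of_pos hb s), mul_rpow (abs_nonneg x) (rpow_nonneg hb.le s),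
    rpow_mul hb.le]

theorem dotProduct_le_weightedPowSum_rpow_mul {p q : ℝ} (hpq : q.HolderConjugate p)
    {a : ι → ℝ} (ha : ∀ i, 0 < a i) (v θ : ι → ℝ) :
    v ⬝ᵥ θ ≤ weightedPowSum a q v ^ (1 / q) *
      weightedPowSum (fun i => a i ^ (1 - p)) p θ ^ (1 / p) := by
  have hqp : -(1 / q) * p = 1 - p := by linear_combination -hpq.symm.div_conj_eq_sub_one
  have key := inner_le_Lp_mul_Lq univ (fun i => v i * a i ^ (1 / q))
    (fun i => θ i * a i ^ (-(1 / q))) hpq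
  simp only [abs_mul_rpow_rpow _ (ha _), hqp, one_div_mul_cancel hpq.ne_zero, rpow_one] at key
  refine le_of_eq_of_le (sum_congr rfl fun i _ => ?_) key
  rw [mul_mul_mul_comm, ← rpow_add (ha i), add_neg_cancel, rpow_zero, mul_one]

lemma rpow_two_div_eq_sq {x : ℝ} (hx : 0 ≤ x) (r : ℝ) : x ^ (2 / r) = (x ^ (1 / r)) ^ 2 := by
  rw [← rpow_natCast, ← rpow_mul hx]
  ring_nf

lemma mul_sub_sq_le {w : ℝ} (hw : 0 < w) (u m : ℝ) :
    u * m - 1 / (2 * w) * u ^ 2 ≤ w / 2 * m ^ 2 := by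
  have h : w / 2 * m ^ 2 - (u * m - 1 / (2 * w) * u ^ 2) = 1 / (2 * w) * (u - w * m) ^ 2 := by
    field_simp
    ring
  rw [← sub_nonneg, h]
  positivity

theorem dotProduct_sub_weightedPowSum_rpow_le {p q : ℝ} (hpq : q.HolderConjugate p)
    {a : ι → ℝ} (ha : ∀ i, 0 < a i) (v θ : ι → ℝ) :
    v ⬝ᵥ θ - 1 / (2 * (q - 1)) * weightedPowSum a q v ^ (2 / q) ≤
      (q - 1) / 2 * weightedPowSum (fun i => a i ^ (1 - p)) p θ ^ (2 / p) := by
  have hX := weightedPowSum_nonneg (fun i => (ha i).le) q v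
  have hT := weightedPowSum_nonneg (fun i => (rpow_pos_of_pos (ha i) (1 - p)).le) p θ
  rw [rpow_two_div_eq_sq hX, rpow_two_div_eq_sq hT]
  linarith [dotProduct_le_weightedPowSum_rpow_mul hpq ha v θ,
    mul_sub_sq_le hpq.sub_one_pos (weightedPowSum a q v ^ (1 / q))
      (weightedPowSum (fun i => a i ^ (1 - p)) p θ ^ (1 / p))]

noncomputable def dualVector (a : ι → ℝ) (p : ℝ) (θ : ι → ℝ) : ι → ℝ :=
  fun i => θ i * |θ i| ^ (p - 2) * a i ^ (1 - p)

lemma dualVector_dotProduct (a : ι → ℝ) {p : ℝ} (hp : p ≠ 0) (θ : ι → ℝ) :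
    dualVector a p θ ⬝ᵥ θ = weightedPowSum (fun i => a i ^ (1 - p)) p θ := by
  refine sum_congr rfl fun i _ => ?_
  have : |θ i| ^ p = θ i ^ 2 * |θ i| ^ (p - 2) := by
    rw [← sq_abs, ← rpow_two, ← rpow_add' (abs_nonneg _) (by simpa)]
    ring_nf
  simp only [dualVector, this]
  ring

lemma weightedPowSum_dualVector {p q : ℝ} (hpq : q.HolderConjugate p) {a : ι → ℝ}
    (ha : ∀ i, 0 < a i) (θ : ι → ℝ) :
    weightedPowSum a q (dualVector a p θ) = weightedPowSum (fun i => a i ^ (1 - p)) p θ := by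
  refine sum_congr rfl fun i _ => ?_
  have habs : |θ i * |θ i| ^ (p - 2)| = |θ i| ^ (p - 1) := by
    rw [abs_mul, abs_of_nonneg (rpow_nonneg (abs_nonneg _) _), ← rpow_one_add' (abs_nonneg _)]
    · ring_nf
    · linarith [hpq.symm.sub_one_pos]
  have hexp : (1 - p) * q + 1 = 1 - p := by linear_combination -hpq.symm.sub_one_mul_conj
  rw [dualVector, abs_mul_rpow_rpow _ (ha i), habs, ← rpow_mul (abs_nonneg _),
    hpq.symm.sub_one_mul_conj, mul_assoc, ← rpow_add_one (ha i).ne', hexp]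

theorem exists_dotProduct_sub_weightedPowSum_rpow_eq {p q : ℝ} (hpq : q.HolderConjugate p)
    {a : ι → ℝ} (ha : ∀ i, 0 < a i) (θ : ι → ℝ) :
    ∃ v : ι → ℝ, v ⬝ᵥ θ - 1 / (2 * (q - 1)) * weightedPowSum a q v ^ (2 / q) =
      (q - 1) / 2 * weightedPowSum (fun i => a i ^ (1 - p)) p θ ^ (2 / p) := by
  set T := weightedPowSum (fun i => a i ^ (1 - p)) p θ
  have hT : 0 ≤ T := weightedPowSum_nonneg (fun i => (rpow_pos_of_pos (ha i) (1 - p)).le) p θ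
  have hq1 := hpq.sub_one_pos
  have hp0 := hpq.symm.ne_zero
  set c := (q - 1) * T ^ ((2 - p) / p)
  have hc : 0 ≤ c := by positivity
  have h2p : 2 / p ≠ 0 := div_ne_zero two_ne_zero hp0
  have hlin : T ^ ((2 - p) / p) * T = T ^ (2 / p) := by
    have e : (2 - p) / p + 1 = 2 / p := by field_simp; ring
    rw [← rpow_add_one' hT (e ▸ h2p), e]
  have hquad : (T ^ ((2 - p) / p)) ^ 2 * T ^ (2 / q) = T ^ (2 / p) := by
    have e : (2 - p) / p * 2 + 2 / q = 2 / p := by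
      rw [div_eq_mul_inv 2 q, ← hpq.symm.one_sub_inv]
      field_simp
      ring
    rw [← rpow_natCast, ← rpow_mul hT, ← rpow_add' hT (e ▸ h2p)]
    norm_num [e]
  refine ⟨c • dualVector a p θ, ?_⟩
  rw [smul_dotProduct, dualVector_dotProduct a hp0, weightedPowSum_smul a q hc,
    weightedPowSum_dualVector hpq ha, mul_rpow (rpow_nonneg hc q) hT, ← rpow_mul hc,
    mul_div_cancel₀ _ hpq.ne_zero, rpow_two, smul_eq_mul, mul_pow, mul_assoc, hlin, mul_assoc,
    hquad]
  field_simp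
  ring

end

theorem stmt_5_general {d : ℕ} (a : Fin d → ℝ) (ha : ∀ i, 0 < a i)
    (q p : ℝ) (hq1 : 1 < q) (hp : p = q / (q - 1))
    (f : (Fin d → ℝ) → ℝ)
    (hf : ∀ w, f w = 1 / (2 * (q - 1)) * (∑ i, |w i| ^ q * a i) ^ (2 / q)) :
    ∀ θ : Fin d → ℝ,
      IsLUB {r | ∃ v : Fin d → ℝ, r = v ⬝ᵥ θ - f v}
        (1 / (2 * (p - 1)) * (∑ i, |θ i| ^ p * a i ^ (1 - p)) ^ (2 / p)) := by
  intro θ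
  have hpq : q.HolderConjugate p := (holderConjugate_iff_eq_conjExponent hq1).2 hp
  have hconst : 1 / (2 * (p - 1)) = (q - 1) / 2 := by
    rw [hp]
    field_simp [hpq.sub_one_ne_zero]
    ring
  rw [hconst]
  refine IsGreatest.isLUB ⟨?_, ?_⟩
  · obtain ⟨v, hv⟩ := exists_dotProduct_sub_weightedPowSum_rpow_eq hpq ha θ
    exact ⟨v, by rw [hf]; exact hv.symm⟩
  · rintro r ⟨v, rfl⟩
    rw [hf]
    exact dotProduct_sub_weightedPowSum_rpow_le hpq ha v θ

/-- Lemma 2, first part: the Fenchel conjugate of the weighted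
squared-`q`-norm regularizer `f(w) = (1/(2(q-1))) (Σ_i |w_i|^q a_i)^{2/q}` is
`f*(θ) = (1/(2(p-1))) (Σ_i |θ_i|^p a_i^{1-p})^{2/p}` with `p = q/(q-1)`.
The conjugate value is expressed as the least upper bound of
`{⟨v,θ⟩ - f(v) : v ∈ ℝ^d}`. -/
theorem stmt_5 {d : ℕ} (a : Fin d → ℝ) (ha : ∀ i, 0 < a i)
    (q p : ℝ) (hq1 : 1 < q) (hq2 : q ≤ 2) (hp : p = q / (q - 1))
    (f : (Fin d → ℝ) → ℝ)
    (hf : ∀ w, f w = 1 / (2 * (q - 1)) * (∑ i, |w i| ^ q * a i) ^ (2 / q)) :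
    ∀ θ : Fin d → ℝ,
      IsLUB {r | ∃ v : Fin d → ℝ, r = v ⬝ᵥ θ - f v}
        (1 / (2 * (p - 1)) * (∑ i, |θ i| ^ p * a i ^ (1 - p)) ^ (2 / p)) :=
  stmt_5_general a ha q p hq1 hp f hf
end

section
/- Let a_1,…,a_d > 0 and q ∈ (1,2], and define f : ℝ^d → ℝ by f(w) = (1/(2(q−1))) · (Σ_{i=1}^d |w_i|^q a_i)^{2/q}. Then f is 1-strongly convex with respect to the weighted q-norm ‖x‖ = (Σ_{i=1}^d |x_i|^q a_i)^{1/q}; that is, for all u,v ∈ ℝ^d and every subgradient g of f at u, f(v) ≥ f(u) + ⟨g, v−u⟩ + (1/2)‖u−v‖². -/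
/-!
Along the line `x ↦ u + x • e`, `e = v - u`, the function `f` becomes
`φ x = C (Σ |u i + x e i| ^ q a i) ^ (2 / q)` with `C = 1 / (2 (q - 1))`, and the claim is the
subgradient inequality at `x = 0` for a `c`-strongly convex `φ`, `c = (Σ |e i| ^ q a i) ^ (2 / q)`.
Replacing `|y| ^ q` by `(y ^ 2 + ε) ^ (q / 2)` makes `φ = C M ^ (2 / q)` smooth, and as `2 / q ≥ 1`,
`(M ^ (2 / q))'' ≥ (2 / q) M ^ (2 / q - 1) M''
  ≥ 2 (q - 1) M ^ (2 / q - 1) Σ e i ^ 2 z i ^ (q / 2 - 1) a i`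
with `z i = y i ^ 2 + ε`, the second step using `q ≤ 2`. Hölder's inequality with exponents
`2 / q` and `2 / (2 - q)` bounds the last expression below by `2 (q - 1) c`, and strong convexity
passes to the limit `ε → 0`.
-/

open Finset Matrix Set Filter Topology

section

variable {E : Type*} [NormedAddCommGroup E] [NormedSpace ℝ E]

lemma StrongConvexOn.const_mul {s : Set E} {f : E → ℝ} {m c : ℝ} (hf : StrongConvexOn s m f)
    (hc : 0 ≤ c) : StrongConvexOn s (c * m) fun x ↦ c * f x := by
  refine ⟨hf.1, fun x hx y hy a b ha hb hab ↦ ?_⟩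
  have := mul_le_mul_of_nonneg_left (hf.2 hx hy ha hb hab) hc
  simp only [smul_eq_mul] at this ⊢
  linear_combination this

lemma UniformConvexOn.of_tendsto {ι : Type*} {l : Filter ι} [l.NeBot] {s : Set E} {φ : ℝ → ℝ}
    {F : ι → E → ℝ} {f : E → ℝ} (hF : ∀ᶠ i in l, UniformConvexOn s φ (F i))
    (hlim : ∀ x ∈ s, Tendsto (fun i ↦ F i x) l (𝓝 (f x))) : UniformConvexOn s φ f := by
  obtain ⟨i, hi⟩ := hF.exists
  refine ⟨hi.1, fun x hx y hy a b ha hb hab ↦ ?_⟩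
  have hxy := (hlim x hx).const_smul a |>.add ((hlim y hy).const_smul b) |>.sub_const
    (a * b * φ ‖x - y‖)
  exact le_of_tendsto_of_tendsto (hlim _ (hi.1 hx hy ha hb hab)) hxy
    (hF.mono fun i hi ↦ hi.2 hx hy ha hb hab)

end

lemma strongConvexOn_univ_of_hasDerivAt2 {f f' f'' : ℝ → ℝ} {m : ℝ}
    (hf : ∀ x, HasDerivAt f (f' x) x) (hf' : ∀ x, HasDerivAt f' (f'' x) x)
    (hm : ∀ x, m ≤ f'' x) : StrongConvexOn univ m f := by
  rw [strongConvexOn_iff_convex]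
  simp only [Real.norm_eq_abs, sq_abs]
  refine convexOn_of_hasDerivWithinAt2_nonneg (f' := fun x ↦ f' x - m * x)
    (f'' := fun x ↦ f'' x - m) convex_univ ?_ (fun x _ ↦ ?_) (fun x _ ↦ ?_) fun x _ ↦ ?_
  · exact fun x _ ↦ ((hf x).continuousAt.sub (by fun_prop)).continuousWithinAt
  · rw [interior_univ, hasDerivWithinAt_univ]
    convert (hf x).fun_sub ((hasDerivAt_pow 2 x).const_mul (m / 2)) using 1
    push_cast; ring
  · rw [interior_univ, hasDerivWithinAt_univ]
    simpa using (hf' x).fun_sub ((hasDerivAt_id x).const_mul m)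
  · simpa using hm x

lemma StrongConvexOn.subgradient_add_sq_le {φ : ℝ → ℝ} {m s x y : ℝ}
    (hφ : StrongConvexOn univ m φ) (hs : ∀ z, φ x + s * (z - x) ≤ φ z) :
    φ x + s * (y - x) + m / 2 * (y - x) ^ 2 ≤ φ y := by
  have hlim : Tendsto (fun t : ℝ ↦ s * (y - x) + (1 - t) * (m / 2 * (y - x) ^ 2)) (𝓝[>] 0)
      (𝓝 (s * (y - x) + m / 2 * (y - x) ^ 2)) := by
    refine tendsto_nhdsWithin_of_tendsto_nhds ((Continuous.tendsto' (by fun_prop) 0 _ ?_))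
    ring
  suffices ∀ t ∈ Ioo (0 : ℝ) 1, s * (y - x) + (1 - t) * (m / 2 * (y - x) ^ 2) ≤ φ y - φ x by
    linarith [le_of_tendsto hlim (eventually_of_mem (Ioo_mem_nhdsGT one_pos) this)]
  rintro t ⟨ht0, ht1⟩
  have hconv := hφ.2 (mem_univ x) (mem_univ y) (sub_nonneg.2 ht1.le) ht0.le (by ring)
  have hsupp := hs ((1 - t) • x + t • y)
  simp only [smul_eq_mul, Real.norm_eq_abs, sq_abs] at hconv hsupp
  refine le_of_mul_le_mul_left ?_ ht0
  nlinarith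

lemma strongConvexOn_rpow_of_hasDerivAt2 {M M' M'' : ℝ → ℝ} {p m : ℝ} (hp : 1 ≤ p)
    (hM : ∀ x, 0 < M x) (hM' : ∀ x, HasDerivAt M (M' x) x) (hM'' : ∀ x, HasDerivAt M' (M'' x) x)
    (hm : ∀ x, m ≤ p * M x ^ (p - 1) * M'' x) : StrongConvexOn univ m fun x ↦ M x ^ p := by
  refine strongConvexOn_univ_of_hasDerivAt2 (f' := fun x ↦ p * M x ^ (p - 1) * M' x)
    (f'' := fun x ↦ p * ((p - 1) * M x ^ (p - 2) * M' x ^ 2 + M x ^ (p - 1) * M'' x))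
    (fun x ↦ ?_) (fun x ↦ ?_) fun x ↦ ?_
  · exact ((hM' x).rpow_const (Or.inl (hM x).ne')).congr_deriv (by ring)
  · have := (((hM' x).rpow_const (p := p - 1) (Or.inl (hM x).ne')).const_mul p).mul (hM'' x)
    refine this.congr_deriv ?_
    rw [show p - 1 - 1 = p - 2 by ring]
    ring
  · have : 0 ≤ p * ((p - 1) * M x ^ (p - 2) * M' x ^ 2) := by
      have := (hM x).le
      have : 0 ≤ p - 1 := by linarith
      positivity
    linarith [hm x]

lemma sq_rpow_div_two (x r : ℝ) : (x ^ 2) ^ (r / 2) = |x| ^ r := by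
  rw [← sq_abs, ← Real.rpow_natCast, ← Real.rpow_mul (abs_nonneg x)]
  congr 1
  push_cast
  ring

lemma hasDerivAt_sq_add_rpow {ε : ℝ} (hε : 0 < ε) (p z : ℝ) :
    HasDerivAt (fun z : ℝ ↦ (z ^ 2 + ε) ^ p) (2 * p * z * (z ^ 2 + ε) ^ (p - 1)) z := by
  have := ((hasDerivAt_pow 2 z).add_const ε).rpow_const (p := p) (Or.inl (by positivity))
  exact this.congr_deriv (by push_cast; ring)

lemma hasDerivAt_mul_sq_add_rpow {ε : ℝ} (hε : 0 < ε) (q z : ℝ) :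
    HasDerivAt (fun z : ℝ ↦ q * z * (z ^ 2 + ε) ^ (q / 2 - 1))
      (q * ((q - 1) * z ^ 2 + ε) * (z ^ 2 + ε) ^ (q / 2 - 2)) z := by
  have := ((hasDerivAt_id' z).const_mul q).mul (hasDerivAt_sq_add_rpow hε (q / 2 - 1) z)
  refine this.congr_deriv ?_
  rw [show q / 2 - 1 - 1 = q / 2 - 2 by ring, show q / 2 - 1 = (q / 2 - 2) + 1 by ring,
    Real.rpow_add_one (by positivity : z ^ 2 + ε ≠ 0)]
  ring

lemma mul_sq_add_rpow_le {q ε : ℝ} (hq0 : 0 ≤ q) (hq2 : q ≤ 2) (hε : 0 < ε) (z : ℝ) :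
    q * (q - 1) * (z ^ 2 + ε) ^ (q / 2 - 1) ≤
      q * ((q - 1) * z ^ 2 + ε) * (z ^ 2 + ε) ^ (q / 2 - 2) := by
  have hz : 0 < z ^ 2 + ε := by positivity
  rw [show q / 2 - 1 = (q / 2 - 2) + 1 by ring, Real.rpow_add_one hz.ne']
  have := Real.rpow_nonneg hz.le (q / 2 - 2)
  have : (q - 1) * (z ^ 2 + ε) ≤ (q - 1) * z ^ 2 + ε := by nlinarith
  calc q * (q - 1) * ((z ^ 2 + ε) ^ (q / 2 - 2) * (z ^ 2 + ε))
      = q * ((q - 1) * (z ^ 2 + ε)) * (z ^ 2 + ε) ^ (q / 2 - 2) := by ring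
    _ ≤ _ := by gcongr

lemma hasDerivAt_sum_comp_line {ι : Type*} [Fintype ι] {g g' : ℝ → ℝ}
    (hg : ∀ z, HasDerivAt g (g' z) z) (u e a : ι → ℝ) (x : ℝ) :
    HasDerivAt (fun x ↦ ∑ i, g (u i + x * e i) * a i)
      (∑ i, g' (u i + x * e i) * (e i * a i)) x := by
  refine HasDerivAt.fun_sum fun i _ ↦ ?_
  have hline : HasDerivAt (fun x ↦ u i + x * e i) (e i) x := by
    simpa using ((hasDerivAt_id x).mul_const (e i)).const_add (u i)
  exact (((hg _).comp x hline).mul_const (a i)).congr_deriv (by ring)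

lemma rpow_sum_abs_rpow_le_holder {ι : Type*} [Fintype ι] {q : ℝ} (hq0 : 0 < q) (hq2 : q ≤ 2)
    (e z a : ι → ℝ) (hz : ∀ i, 0 < z i) (ha : ∀ i, 0 ≤ a i) :
    (∑ i, |e i| ^ q * a i) ^ (2 / q) ≤
      (∑ i, e i ^ 2 * z i ^ (q / 2 - 1) * a i) * (∑ i, z i ^ (q / 2) * a i) ^ (2 / q - 1) := by
  have hp : 1 ≤ 2 / q := by rw [le_div_iff₀ hq0]; linarith
  have holder := Real.inner_le_weight_mul_Lp_of_nonneg univ hp (fun i ↦ z i ^ (q / 2) * a i)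
    (fun i ↦ |e i| ^ q / z i ^ (q / 2)) (fun i ↦ by have := ha i; have := hz i; positivity)
    (fun i ↦ div_nonneg (by positivity) (Real.rpow_nonneg (hz i).le _))
  have hprod (i : ι) : z i ^ (q / 2) * a i * (|e i| ^ q / z i ^ (q / 2)) = |e i| ^ q * a i := by
    have := (Real.rpow_pos_of_pos (hz i) (q / 2)).ne'
    field_simp
  have hprod_pow (i : ι) : z i ^ (q / 2) * a i * (|e i| ^ q / z i ^ (q / 2)) ^ (2 / q) =
      e i ^ 2 * z i ^ (q / 2 - 1) * a i := by
    rw [Real.div_rpow (by positivity) (by have := hz i; positivity), ← Real.rpow_mul (abs_nonneg _),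
      ← Real.rpow_mul (hz i).le, Real.rpow_sub_one (hz i).ne']
    field_simp
    rw [Real.rpow_one, Real.rpow_two, sq_abs]
  simp only [hprod, hprod_pow, inv_div] at holder
  have hA : 0 ≤ ∑ i, e i ^ 2 * z i ^ (q / 2 - 1) * a i :=
    sum_nonneg fun i _ ↦ by have := ha i; have := hz i; positivity
  have hB : 0 ≤ ∑ i, z i ^ (q / 2) * a i :=
    sum_nonneg fun i _ ↦ by have := ha i; have := hz i; positivity
  calc (∑ i, |e i| ^ q * a i) ^ (2 / q)
      ≤ ((∑ i, z i ^ (q / 2) * a i) ^ (1 - q / 2) *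
          (∑ i, e i ^ 2 * z i ^ (q / 2 - 1) * a i) ^ (q / 2)) ^ (2 / q) := by
        gcongr
        exact sum_nonneg fun i _ ↦ by have := ha i; positivity
    _ = _ := by
        rw [Real.mul_rpow (by positivity) (by positivity), ← Real.rpow_mul hA, ← Real.rpow_mul hB]
        field_simp
        rw [Real.rpow_one]

lemma le_smoothed_second_deriv {ι : Type*} [Fintype ι] {a : ι → ℝ} (ha : ∀ i, 0 ≤ a i)
    {q ε : ℝ} (hq1 : 1 < q) (hq2 : q ≤ 2) (hε : 0 < ε) (e y : ι → ℝ) :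
    2 * (q - 1) * (∑ i, |e i| ^ q * a i) ^ (2 / q) ≤
      2 / q * (ε + ∑ i, (y i ^ 2 + ε) ^ (q / 2) * a i) ^ (2 / q - 1) *
        ∑ i, q * ((q - 1) * y i ^ 2 + ε) * (y i ^ 2 + ε) ^ (q / 2 - 2) * (e i * (e i * a i)) := by
  have hq0 : 0 < q := by linarith
  set A := ∑ i, e i ^ 2 * (y i ^ 2 + ε) ^ (q / 2 - 1) * a i
  set M := ε + ∑ i, (y i ^ 2 + ε) ^ (q / 2) * a i
  have hA : 0 ≤ A := sum_nonneg fun i _ ↦ by have := ha i; positivity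
  have hM : 0 ≤ M := add_nonneg hε.le (sum_nonneg fun i _ ↦ by have := ha i; positivity)
  have hholder : (∑ i, |e i| ^ q * a i) ^ (2 / q) ≤ A * M ^ (2 / q - 1) := by
    refine (rpow_sum_abs_rpow_le_holder hq0 hq2 e (fun i ↦ y i ^ 2 + ε) a
      (fun i ↦ by positivity) ha).trans ?_
    have : 0 ≤ 2 / q - 1 := by rw [sub_nonneg, le_div_iff₀ hq0]; linarith
    gcongr
    · exact sum_nonneg fun i _ ↦ by have := ha i; positivity
    · exact le_add_of_nonneg_left hε.le
  have hsum : q * (q - 1) * A ≤ ∑ i, q * ((q - 1) * y i ^ 2 + ε) *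
      (y i ^ 2 + ε) ^ (q / 2 - 2) * (e i * (e i * a i)) := by
    rw [mul_sum]
    refine sum_le_sum fun i _ ↦ ?_
    have := mul_le_mul_of_nonneg_right (mul_sq_add_rpow_le hq0.le hq2 hε (y i))
      (by have := ha i; positivity : 0 ≤ e i ^ 2 * a i)
    linear_combination this
  have hq1' : 0 ≤ 2 * (q - 1) := by linarith
  calc 2 * (q - 1) * (∑ i, |e i| ^ q * a i) ^ (2 / q)
      ≤ 2 * (q - 1) * (A * M ^ (2 / q - 1)) := by gcongr
    _ = 2 / q * M ^ (2 / q - 1) * (q * (q - 1) * A) := by field_simp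
    _ ≤ _ := by gcongr

-- The summand `ε` outside the sum keeps `M` positive even when all weights vanish.
lemma strongConvexOn_smoothed_line {ι : Type*} [Fintype ι] {a : ι → ℝ} (ha : ∀ i, 0 ≤ a i)
    {q ε : ℝ} (hq1 : 1 < q) (hq2 : q ≤ 2) (hε : 0 < ε) (u e : ι → ℝ) :
    StrongConvexOn univ ((∑ i, |e i| ^ q * a i) ^ (2 / q)) fun x ↦
      1 / (2 * (q - 1)) * (ε + ∑ i, ((u i + x * e i) ^ 2 + ε) ^ (q / 2) * a i) ^ (2 / q) := by
  have hq0 : 0 < q := by linarith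
  have hp : 1 ≤ 2 / q := by rw [le_div_iff₀ hq0]; linarith
  have hM (x : ℝ) := (hasDerivAt_sum_comp_line (g' := fun z ↦ q * z * (z ^ 2 + ε) ^ (q / 2 - 1))
    (fun z ↦ (hasDerivAt_sq_add_rpow hε (q / 2) z).congr_deriv (by ring)) u e a x).const_add ε
  have hM' (x : ℝ) := hasDerivAt_sum_comp_line (hasDerivAt_mul_sq_add_rpow hε q) u e
    (fun i ↦ e i * a i) x
  have hMpos (x : ℝ) : 0 < ε + ∑ i, ((u i + x * e i) ^ 2 + ε) ^ (q / 2) * a i :=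
    add_pos_of_pos_of_nonneg hε (sum_nonneg fun i _ ↦ by have := ha i; positivity)
  have hq1' : 0 < q - 1 := by linarith
  convert (strongConvexOn_rpow_of_hasDerivAt2 hp hMpos hM hM'
    fun x ↦ le_smoothed_second_deriv ha hq1 hq2 hε e _).const_mul
      (c := 1 / (2 * (q - 1))) (by positivity) using 1
  field_simp

lemma strongConvexOn_line {ι : Type*} [Fintype ι] {a : ι → ℝ} (ha : ∀ i, 0 ≤ a i) {q : ℝ}
    (hq1 : 1 < q) (hq2 : q ≤ 2) (u e : ι → ℝ) :
    StrongConvexOn univ ((∑ i, |e i| ^ q * a i) ^ (2 / q)) fun x ↦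
      1 / (2 * (q - 1)) * (∑ i, |u i + x * e i| ^ q * a i) ^ (2 / q) := by
  refine UniformConvexOn.of_tendsto (l := 𝓝[>] (0 : ℝ)) (eventually_nhdsWithin_of_forall
    fun ε (hε : 0 < ε) ↦ strongConvexOn_smoothed_line ha hq1 hq2 hε u e) fun x _ ↦ ?_
  have hcont : Continuous fun ε : ℝ ↦
      1 / (2 * (q - 1)) * (ε + ∑ i, ((u i + x * e i) ^ 2 + ε) ^ (q / 2) * a i) ^ (2 / q) := by
    have hq0 : 0 < q := by linarith
    fun_prop (disch := positivity)
  refine tendsto_nhdsWithin_of_tendsto_nhds (hcont.tendsto' 0 _ ?_)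
  simp [sq_rpow_div_two]

/-- Lemma 2, second part: the weighted squared-`q`-norm regularizer
`f(w) = (1/(2(q-1))) (Σ_i |w_i|^q a_i)^{2/q}` is `1`-strongly convex with respect to
the weighted `q`-norm `‖x‖ = (Σ_i |x_i|^q a_i)^{1/q}`: for all `u, v` and every
subgradient `g` of `f` at `u`, `f(v) ≥ f(u) + ⟨g, v-u⟩ + (1/2)‖u-v‖²`. -/
theorem stmt_6 {d : ℕ} (a : Fin d → ℝ) (ha : ∀ i, 0 < a i)
    (q : ℝ) (hq1 : 1 < q) (hq2 : q ≤ 2)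
    (f : (Fin d → ℝ) → ℝ)
    (hf : ∀ w, f w = 1 / (2 * (q - 1)) * (∑ i, |w i| ^ q * a i) ^ (2 / q)) :
    ∀ u v g : Fin d → ℝ,
      (∀ z, f z ≥ f u + g ⬝ᵥ (z - u)) →
      f v ≥ f u + g ⬝ᵥ (v - u) +
        1 / 2 * ((∑ i, |u i - v i| ^ q * a i) ^ ((1 : ℝ) / q)) ^ 2 := by
  intro u v g hsub
  set φ : ℝ → ℝ := fun x ↦ f (u + x • (v - u))
  have hconv : StrongConvexOn univ ((∑ i, |(v - u) i| ^ q * a i) ^ (2 / q)) φ := by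
    convert strongConvexOn_line (fun i ↦ (ha i).le) hq1 hq2 u (v - u) using 2 with x
    simp [φ, hf]
  have hsupp (x : ℝ) : φ 0 + g ⬝ᵥ (v - u) * (x - 0) ≤ φ x := by
    simpa [φ, dotProduct_smul, mul_comm] using hsub (u + x • (v - u))
  have hnorm : ((∑ i, |u i - v i| ^ q * a i) ^ ((1 : ℝ) / q)) ^ 2 =
      (∑ i, |(v - u) i| ^ q * a i) ^ (2 / q) := by
    have hsum : 0 ≤ ∑ i, |u i - v i| ^ q * a i :=
      sum_nonneg fun i _ ↦ by have := (ha i).le; positivity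
    rw [← Real.rpow_natCast, ← Real.rpow_mul hsum]
    simp [abs_sub_comm, div_eq_mul_inv, mul_comm]
  have := hconv.subgradient_add_sq_le (y := 1) hsupp
  simp only [φ, zero_smul, one_smul, add_zero, add_sub_cancel, sub_zero, mul_one, one_pow] at this
  rw [hnorm]
  linarith
end

section
/- Fix L > 0, η > 0, and a loss ℓ : ℝ×ℝ → ℝ such that ℓ(·,y) is convex and L-Lipschitz for every y ∈ ℝ. Let (x_1,y_1),…,(x_T,y_T) ∈ ℝ^d×ℝ be examples and set b_{t,i} = max_{s ≤ t} |x_{s,i}|. Define the algorithm: θ_1 = 0; at step t, set w_{t,j} = θ_{t,j} / ( b_{t,j}² √d · √( L² + Σ_{s=1}^{t−1} (ℓ'_{s,j}/b_{s,j})² ) ) for coordinates j with b_{t,j} > 0 and w_{t,j} = 0 otherwise (with the convention 0/0 = 0 in all ratios ℓ'_{s,j}/b_{s,j}); then θ_{t+1} = θ_t − η ℓ'_t, where ℓ'_t = g_t x_t and g_t is a subderivative of ℓ(·,y_t) at w_tᵀx_t. Then for every u ∈ ℝ^d: Σ_{t=1}^T ℓ(w_tᵀx_t, y_t) − Σ_{t=1}^T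 ℓ(uᵀx_t, y_t) ≤ L √(d(T+1)) · ( (1/(2η)) Σ_{i=1}^d (u_i b_{T,i})² + η ). -/
/-!
The subgradient inequality bounds the regret by the linear regret `∑ₜ ℓ'ₜ ⬝ᵥ (wₜ - u)`, which splits
into `d` one-dimensional problems. In coordinate `j` the iterate is `wₜ = -η Θₜ / Bₜ`, where `Θₜ` is
the sum of the past gradients and `Bₜ = bₜ² √d Hₜ` is a nondecreasing scale. The potential
`Φₜ = η Θₜ² / (2 Bₜ)` telescopes and leaves the stability terms `η ℓ'ₜ² / (2 Bₜ)`; Young's inequality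
charges the comparator `u² B_{T+1} / (2η)`. Since `|ℓ'ₜ| ≤ L bₜ`, the stability terms are
`η / (2√d) · aₜ / √(L² + a₁ + ⋯ + aₜ₋₁)` with `aₜ = (ℓ'ₜ / bₜ)² ≤ L²`, and the AdaGrad inequality sums them
to at most `η / √d · L √(T + 1)`.

While `bₜ = 0` no nonzero gradient has been seen in that coordinate, so `Bₜ = Θₜ = 0`, and Lean's
`x / 0 = 0` lets those rounds run through the same formulas.
-/

open Finset Matrix

noncomputable section

namespace ScaleFreeOMD

def prefixSum {M : Type*} [AddCommMonoid M] (a : ℕ → M) (t : ℕ) : M :=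
  ∑ s ∈ Icc 1 (t - 1), a s

section PrefixSum

variable {M : Type*} [AddCommMonoid M] (a : ℕ → M)

@[simp]
lemma prefixSum_one : prefixSum a 1 = 0 := by
  simp [prefixSum]

lemma prefixSum_add_one {t : ℕ} (ht : 1 ≤ t) : prefixSum a (t + 1) = prefixSum a t + a t := by
  obtain ⟨k, rfl⟩ := Nat.exists_eq_add_of_le' ht
  simpa [prefixSum] using sum_Icc_succ_top (by omega : 1 ≤ k + 1) a

end PrefixSum

lemma prefixSum_nonneg {a : ℕ → ℝ} {T t : ℕ} (ha : ∀ s ∈ Icc 1 T, 0 ≤ a s) (ht : t ≤ T + 1) :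
    0 ≤ prefixSum a t :=
  sum_nonneg fun s hs => ha s (Icc_subset_Icc_right (by omega) hs)

lemma sum_Icc_one_sub (f : ℕ → ℝ) (T : ℕ) :
    ∑ t ∈ Icc 1 T, (f (t + 1) - f t) = f (T + 1) - f 1 := by
  rw [← Ico_add_one_right_eq_Icc, sum_Ico_sub f (by omega)]

lemma div_sqrt_add_le_two_mul_sqrt_sub {a C S : ℝ} (ha : 0 ≤ a) (haC : a ≤ C) (hS : 0 ≤ S) :
    a / √(C + S) ≤ 2 * (√(S + a) - √S) := by
  rcases ha.eq_or_lt with rfl | ha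
  · simp
  set r := √(S + a)
  have hr : 0 < r := Real.sqrt_pos.2 (by linarith)
  have hrs : √S ≤ r := Real.sqrt_le_sqrt (by linarith)
  have ha_eq : a = (r - √S) * (r + √S) := by
    linear_combination Real.sq_sqrt hS - Real.sq_sqrt (by linarith : 0 ≤ S + a)
  calc a / √(C + S) ≤ a / r := div_le_div_of_nonneg_left ha.le hr (Real.sqrt_le_sqrt (by linarith))
    _ = (r - √S) * ((r + √S) / r) := by rw [ha_eq, mul_div_assoc]
    _ ≤ (r - √S) * 2 := by
      gcongr
      rw [div_le_iff₀ hr]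
      linarith
    _ = 2 * (r - √S) := mul_comm _ _

theorem sum_div_sqrt_add_prefixSum_le {T : ℕ} {C : ℝ} (a : ℕ → ℝ)
    (ha : ∀ t ∈ Icc 1 T, 0 ≤ a t ∧ a t ≤ C) :
    ∑ t ∈ Icc 1 T, a t / √(C + prefixSum a t) ≤ 2 * √(∑ t ∈ Icc 1 T, a t) := by
  have ha0 : ∀ t ∈ Icc 1 T, 0 ≤ a t := fun t ht => (ha t ht).1
  calc ∑ t ∈ Icc 1 T, a t / √(C + prefixSum a t)
      ≤ ∑ t ∈ Icc 1 T, 2 * (√(prefixSum a (t + 1)) - √(prefixSum a t)) := by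
        refine sum_le_sum fun t ht => ?_
        rw [prefixSum_add_one a (mem_Icc.1 ht).1]
        exact div_sqrt_add_le_two_mul_sqrt_sub (ha t ht).1 (ha t ht).2
          (prefixSum_nonneg ha0 (by have := (mem_Icc.1 ht).2; omega))
    _ = 2 * √(∑ t ∈ Icc 1 T, a t) := by
      rw [← mul_sum, sum_Icc_one_sub (fun t => √(prefixSum a t)), prefixSum_one, Real.sqrt_zero,
        sub_zero]
      rfl

lemma mul_neg_div_le_of_le {η B B' Θ h : ℝ} (hη : 0 ≤ η) (hB : 0 < B) (hBB' : B ≤ B') :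
    h * (-η * Θ / B) ≤
      η * h ^ 2 / (2 * B) - (η * (Θ + h) ^ 2 / (2 * B') - η * Θ ^ 2 / (2 * B)) := by
  have hB' : η * (Θ + h) ^ 2 / (2 * B') ≤ η * (Θ + h) ^ 2 / (2 * B) := by
    gcongr
  have hsplit : h * (-η * Θ / B) =
      η * h ^ 2 / (2 * B) - (η * (Θ + h) ^ 2 / (2 * B) - η * Θ ^ 2 / (2 * B)) := by
    field_simp
    ring
  linarith

lemma neg_mul_le_div_add_div {η B u Θ : ℝ} (hη : 0 < η) (hB : 0 < B) :
    -(u * Θ) ≤ η * Θ ^ 2 / (2 * B) + u ^ 2 * B / (2 * η) := by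
  have hsq : η * Θ ^ 2 / (2 * B) + u ^ 2 * B / (2 * η) + u * Θ =
      (η * Θ + B * u) ^ 2 / (2 * η * B) := by
    field_simp
    ring
  have : 0 ≤ (η * Θ + B * u) ^ 2 / (2 * η * B) := by positivity
  linarith

theorem sum_mul_sub_le_of_scale_mono {T : ℕ} {η u : ℝ} (hη : 0 < η) (h B : ℕ → ℝ)
    (hB0 : ∀ t ∈ Icc 1 (T + 1), 0 ≤ B t) (hBmono : ∀ t ∈ Icc 1 T, B t ≤ B (t + 1))
    (hzero : ∀ s ∈ Icc 1 T, ∀ t ∈ Icc s (T + 1), B t = 0 → h s = 0) :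
    ∑ t ∈ Icc 1 T, h t * (-η * prefixSum h t / B t - u) ≤
      u ^ 2 * B (T + 1) / (2 * η) + ∑ t ∈ Icc 1 T, η * h t ^ 2 / (2 * B t) := by
  set Φ : ℕ → ℝ := fun t => η * prefixSum h t ^ 2 / (2 * B t)
  have hΘzero : ∀ t ∈ Icc 1 (T + 1), B t = 0 → prefixSum h t = 0 := fun t ht hBt =>
    sum_eq_zero fun s hs => by
      simp only [mem_Icc] at ht hs
      exact hzero s (mem_Icc.2 ⟨hs.1, by omega⟩) t (mem_Icc.2 ⟨by omega, ht.2⟩) hBt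
  have hstep : ∀ t ∈ Icc 1 T,
      h t * (-η * prefixSum h t / B t) ≤ η * h t ^ 2 / (2 * B t) - (Φ (t + 1) - Φ t) := by
    intro t ht
    have ht' := mem_Icc.1 ht
    simp only [Φ, prefixSum_add_one h ht'.1]
    rcases (hB0 t (mem_Icc.2 ⟨ht'.1, by omega⟩)).eq_or_lt with hBt | hBt
    · have hht : h t = 0 := hzero t ht t (mem_Icc.2 ⟨le_rfl, by omega⟩) hBt.symm
      simp [hht, hΘzero t (mem_Icc.2 ⟨ht'.1, by omega⟩) hBt.symm]
    · exact mul_neg_div_le_of_le hη.le hBt (hBmono t ht)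
  have hyoung : -(u * prefixSum h (T + 1)) ≤ Φ (T + 1) + u ^ 2 * B (T + 1) / (2 * η) := by
    have hmem : T + 1 ∈ Icc 1 (T + 1) := mem_Icc.2 ⟨by omega, le_rfl⟩
    rcases (hB0 (T + 1) hmem).eq_or_lt with hBT | hBT
    · simp [hΘzero (T + 1) hmem hBT.symm, ← hBT, Φ]
    · exact neg_mul_le_div_add_div hη hBT
  have hΦ1 : Φ 1 = 0 := by simp [Φ]
  have hΦ0 : 0 ≤ Φ (T + 1) := div_nonneg (by positivity) (by linarith [hB0 (T + 1) (by simp)])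
  calc ∑ t ∈ Icc 1 T, h t * (-η * prefixSum h t / B t - u)
      = ∑ t ∈ Icc 1 T, h t * (-η * prefixSum h t / B t) - u * prefixSum h (T + 1) := by
        rw [prefixSum, Nat.add_sub_cancel, mul_sum, ← sum_sub_distrib]
        exact sum_congr rfl fun t _ => by ring
    _ ≤ ∑ t ∈ Icc 1 T, (η * h t ^ 2 / (2 * B t) - (Φ (t + 1) - Φ t))
          - u * prefixSum h (T + 1) := by gcongr with t ht; exact hstep t ht
    _ ≤ _ := by
        rw [sum_sub_distrib, sum_Icc_one_sub, hΦ1]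
        linarith

def adaptiveScale (L : ℝ) (h b : ℕ → ℝ) (t : ℕ) : ℝ :=
  √(L ^ 2 + prefixSum (fun s => (h s / b s) ^ 2) t)

section AdaptiveScale

variable {L : ℝ} {h b : ℕ → ℝ}

lemma le_adaptiveScale (t : ℕ) : L ≤ adaptiveScale L h b t :=
  Real.le_sqrt_of_sq_le (le_add_of_nonneg_right (sum_nonneg fun _ _ => sq_nonneg _))

lemma adaptiveScale_le_add_one (t : ℕ) : adaptiveScale L h b t ≤ adaptiveScale L h b (t + 1) :=
  Real.sqrt_le_sqrt <| (add_le_add_iff_left _).2 (sum_le_sum_of_subset_of_nonneg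
    (Icc_subset_Icc_right (by omega : t - 1 ≤ t + 1 - 1)) fun _ _ _ => sq_nonneg _)

lemma div_sq_le_sq {t : ℕ} (hb : 0 ≤ b t) (hhb : |h t| ≤ L * b t) : (h t / b t) ^ 2 ≤ L ^ 2 := by
  rcases hb.eq_or_lt with hb | hb
  · simp [← hb, sq_nonneg]
  rw [← sq_abs, abs_div, abs_of_pos hb]
  exact pow_le_pow_left₀ (by positivity) ((div_le_iff₀ hb).2 hhb) 2

lemma adaptiveScale_add_one_le {T : ℕ} (hL : 0 ≤ L) (hb : ∀ t ∈ Icc 1 T, 0 ≤ b t)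
    (hhb : ∀ t ∈ Icc 1 T, |h t| ≤ L * b t) : adaptiveScale L h b (T + 1) ≤ L * √(T + 1) := by
  have hsum : prefixSum (fun s => (h s / b s) ^ 2) (T + 1) ≤ T * L ^ 2 := by
    simpa [prefixSum] using sum_le_card_nsmul _ _ _ fun t ht => div_sq_le_sq (hb t ht) (hhb t ht)
  calc adaptiveScale L h b (T + 1) ≤ √(L ^ 2 * (T + 1)) := Real.sqrt_le_sqrt (by linarith)
    _ = L * √(T + 1) := by rw [Real.sqrt_mul (sq_nonneg L), Real.sqrt_sq hL]

lemma sum_div_adaptiveScale_le {T : ℕ} {η c : ℝ} (hL : 0 ≤ L) (hη : 0 ≤ η) (hc : 0 ≤ c)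
    (hb : ∀ t ∈ Icc 1 T, 0 ≤ b t) (hhb : ∀ t ∈ Icc 1 T, |h t| ≤ L * b t) :
    ∑ t ∈ Icc 1 T, η * h t ^ 2 / (2 * (b t ^ 2 * c * adaptiveScale L h b t)) ≤
      η * L * √(T + 1) / c := by
  set a : ℕ → ℝ := fun t => (h t / b t) ^ 2
  have hsqrt : √(∑ t ∈ Icc 1 T, a t) ≤ adaptiveScale L h b (T + 1) :=
    Real.sqrt_le_sqrt (le_add_of_nonneg_left (sq_nonneg L))
  calc ∑ t ∈ Icc 1 T, η * h t ^ 2 / (2 * (b t ^ 2 * c * adaptiveScale L h b t))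
      = η / (2 * c) * ∑ t ∈ Icc 1 T, a t / √(L ^ 2 + prefixSum a t) := by
        rw [mul_sum]
        refine sum_congr rfl fun t _ => ?_
        simp only [a, adaptiveScale]
        ring
    _ ≤ η / (2 * c) * (2 * √(∑ t ∈ Icc 1 T, a t)) := by
        gcongr
        exact sum_div_sqrt_add_prefixSum_le a fun t ht =>
          ⟨sq_nonneg _, div_sq_le_sq (hb t ht) (hhb t ht)⟩
    _ ≤ η / (2 * c) * (2 * (L * √(T + 1))) := by
        gcongr
        exact hsqrt.trans (adaptiveScale_add_one_le hL hb hhb)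
    _ = η * L * √(T + 1) / c := by ring

end AdaptiveScale

theorem sum_mul_sub_le_adaptive {T : ℕ} {L η c u : ℝ} (hL : 0 < L) (hη : 0 < η) (hc : 0 < c)
    (h b w : ℕ → ℝ) (hb0 : ∀ t ∈ Icc 1 T, 0 ≤ b t)
    (hbmono : ∀ s ∈ Icc 1 T, ∀ t ∈ Icc s T, b s ≤ b t)
    (hhb : ∀ t ∈ Icc 1 T, |h t| ≤ L * b t)
    (hw : ∀ t ∈ Icc 1 T, w t =
      if 0 < b t then -η * prefixSum h t / (b t ^ 2 * c * adaptiveScale L h b t) else 0) :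
    ∑ t ∈ Icc 1 T, h t * (w t - u) ≤
      c * L * √(T + 1) * (u * b T) ^ 2 / (2 * η) + η * L * √(T + 1) / c := by
  set H := adaptiveScale L h b
  have hH : ∀ t, 0 < H t := fun t => hL.trans_le (le_adaptiveScale t)
  -- `b` is only known up to round `T`, so the scale of round `T + 1` is built from `b T`.
  set B : ℕ → ℝ := fun t => b (min t T) ^ 2 * c * H t
  have hB0 : ∀ t ∈ Icc 1 (T + 1), 0 ≤ B t := fun t _ => by have := hH t; positivity
  have hBmono : ∀ t ∈ Icc 1 T, B t ≤ B (t + 1) := by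
    intro t ht
    have ht' := mem_Icc.1 ht
    have hbt : b t ≤ b (min (t + 1) T) := hbmono t ht _ (mem_Icc.2 ⟨by omega, min_le_right _ _⟩)
    simp only [B, min_eq_left ht'.2]
    gcongr
    exacts [(hH t).le, hb0 t ht, adaptiveScale_le_add_one t]
  have hzero : ∀ s ∈ Icc 1 T, ∀ t ∈ Icc s (T + 1), B t = 0 → h s = 0 := by
    intro s hs t ht hBt
    have hbt : b (min t T) = 0 := by simpa [B, hc.ne', (hH t).ne'] using hBt
    have hbs : b s = 0 := le_antisymm (hbt ▸ hbmono s hs _ (by simp at hs ht ⊢; omega)) (hb0 s hs)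
    simpa [hbs] using hhb s hs
  have hwB : ∀ t ∈ Icc 1 T, w t = -η * prefixSum h t / B t := by
    intro t ht
    simp only [hw t ht, B, min_eq_left (mem_Icc.1 ht).2]
    split_ifs with hbt
    · rfl
    · simp [le_antisymm (not_lt.1 hbt) (hb0 t ht)]
  have hHT : H (T + 1) ≤ L * √(T + 1) := adaptiveScale_add_one_le hL.le hb0 hhb
  have hcomparator : u ^ 2 * B (T + 1) / (2 * η) ≤ c * L * √(T + 1) * (u * b T) ^ 2 / (2 * η) := by
    calc u ^ 2 * B (T + 1) / (2 * η) = c * (u * b T) ^ 2 * H (T + 1) / (2 * η) := by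
          simp only [B, min_eq_right (Nat.le_succ T)]
          ring
      _ ≤ c * (u * b T) ^ 2 * (L * √(T + 1)) / (2 * η) := by gcongr
      _ = c * L * √(T + 1) * (u * b T) ^ 2 / (2 * η) := by ring
  have hstability : ∑ t ∈ Icc 1 T, η * h t ^ 2 / (2 * B t) ≤ η * L * √(T + 1) / c := by
    calc ∑ t ∈ Icc 1 T, η * h t ^ 2 / (2 * B t)
        = ∑ t ∈ Icc 1 T, η * h t ^ 2 / (2 * (b t ^ 2 * c * H t)) :=
          sum_congr rfl fun t ht => by simp only [B, min_eq_left (mem_Icc.1 ht).2]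
      _ ≤ _ := sum_div_adaptiveScale_le hL.le hη.le hc.le hb0 hhb
  calc ∑ t ∈ Icc 1 T, h t * (w t - u)
      = ∑ t ∈ Icc 1 T, h t * (-η * prefixSum h t / B t - u) :=
        sum_congr rfl fun t ht => by rw [hwB t ht]
    _ ≤ _ := sum_mul_sub_le_of_scale_mono hη h B hB0 hBmono hzero
    _ ≤ _ := add_le_add hcomparator hstability

lemma abs_le_of_forall_le_add_mul_sub {f : ℝ → ℝ} {p g L : ℝ}
    (hsub : ∀ z, f z ≥ f p + g * (z - p)) (hlip : ∀ z z', |f z - f z'| ≤ L * |z - z'|) :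
    |g| ≤ L := by
  have hup := hsub (p + 1)
  have hdown := hsub (p - 1)
  have hlip_up := (abs_le.1 (hlip (p + 1) p)).2
  have hlip_down := (abs_le.1 (hlip (p - 1) p)).2
  simp only [add_sub_cancel_left, sub_sub_cancel_left, abs_one, abs_neg, mul_one, mul_neg]
    at hup hdown hlip_up hlip_down
  exact abs_le.2 ⟨by linarith, by linarith⟩

lemma sub_le_smul_dotProduct_sub {ι : Type*} [Fintype ι] {f : ℝ → ℝ} {g : ℝ} {w u x : ι → ℝ}
    (hsub : ∀ z, f z ≥ f (w ⬝ᵥ x) + g * (z - w ⬝ᵥ x)) :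
    f (w ⬝ᵥ x) - f (u ⬝ᵥ x) ≤ (g • x) ⬝ᵥ (w - u) := by
  rw [smul_dotProduct, dotProduct_sub, dotProduct_comm x w, dotProduct_comm x u, smul_eq_mul]
  linarith [hsub (u ⬝ᵥ x)]

lemma eq_neg_smul_prefixSum {R M : Type*} [Ring R] [AddCommGroup M] [Module R M] {T : ℕ} {η : R}
    {θ v : ℕ → M} (hθ1 : θ 1 = 0) (hθ : ∀ t ∈ Icc 1 T, θ (t + 1) = θ t - η • v t) :
    ∀ t ∈ Icc 1 (T + 1), θ t = -η • prefixSum v t := by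
  intro t ht
  induction t with
  | zero => simp at ht
  | succ t ih =>
    rcases Nat.eq_zero_or_pos t with rfl | ht0
    · simp [hθ1]
    have htT : t ∈ Icc 1 T := by simp at ht ⊢; omega
    rw [hθ t htT, ih (by simp at ht ⊢; omega), prefixSum_add_one v ht0]
    simp only [smul_add, neg_smul, sub_eq_add_neg]

section RunningMax

variable {x b : ℕ → ℝ} {T : ℕ}

lemma abs_le_of_isGreatest (hb : ∀ t ∈ Icc 1 T, IsGreatest {r | ∃ s ∈ Icc 1 t, r = |x s|} (b t))
    {t : ℕ} (ht : t ∈ Icc 1 T) : |x t| ≤ b t :=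
  (hb t ht).2 ⟨t, mem_Icc.2 ⟨(mem_Icc.1 ht).1, le_rfl⟩, rfl⟩

lemma nonneg_of_isGreatest (hb : ∀ t ∈ Icc 1 T, IsGreatest {r | ∃ s ∈ Icc 1 t, r = |x s|} (b t))
    {t : ℕ} (ht : t ∈ Icc 1 T) : 0 ≤ b t :=
  (abs_nonneg _).trans (abs_le_of_isGreatest hb ht)

lemma le_of_isGreatest (hb : ∀ t ∈ Icc 1 T, IsGreatest {r | ∃ s ∈ Icc 1 t, r = |x s|} (b t)) :
    ∀ s ∈ Icc 1 T, ∀ t ∈ Icc s T, b s ≤ b t := by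
  intro s hs t ht
  obtain ⟨s', hs', hbs⟩ := (hb s hs).1
  exact hbs ▸ (hb t (by simp at hs ht ⊢; omega)).2 ⟨s', by simp at hs' ht ⊢; omega, rfl⟩

end RunningMax

end ScaleFreeOMD

open ScaleFreeOMD

theorem stmt_9_general {d T : ℕ}
    (L η : ℝ) (hL : 0 < L) (hη : 0 < η)
    (loss : ℝ → ℝ → ℝ)
    (hlip : ∀ y z z' : ℝ, |loss z y - loss z' y| ≤ L * |z - z'|)
    (x : ℕ → Fin d → ℝ) (y : ℕ → ℝ)
    -- b t i = max over s ≤ t of |x_{s,i}|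
    (b : ℕ → Fin d → ℝ)
    (hb : ∀ t ∈ Icc 1 T, ∀ i, IsGreatest {r | ∃ s ∈ Icc 1 t, r = |x s i|} (b t i))
    -- subgradients: ℓ'_t = g_t x_t with g_t a subderivative of loss(·, y_t) at w_tᵀx_t
    (g : ℕ → ℝ) (ℓ' θ w : ℕ → Fin d → ℝ)
    (hsub : ∀ t ∈ Icc 1 T, ∀ z : ℝ,
      loss z (y t) ≥ loss (w t ⬝ᵥ x t) (y t) + g t * (z - w t ⬝ᵥ x t))
    (hℓ' : ∀ t ∈ Icc 1 T, ℓ' t = g t • x t)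
    (hθ1 : θ 1 = 0)
    (hθ : ∀ t ∈ Icc 1 T, θ (t + 1) = θ t - η • ℓ' t)
    (hw : ∀ t ∈ Icc 1 T, ∀ j, w t j =
      if 0 < b t j then
        θ t j / (b t j ^ 2 * Real.sqrt d
          * Real.sqrt (L ^ 2 + ∑ s ∈ Icc 1 (t - 1), (ℓ' s j / b s j) ^ 2))
      else 0) :
    ∀ u : Fin d → ℝ,
      ∑ t ∈ Icc 1 T, loss (w t ⬝ᵥ x t) (y t)
          - ∑ t ∈ Icc 1 T, loss (u ⬝ᵥ x t) (y t) ≤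
        L * Real.sqrt (d * ((T : ℝ) + 1))
          * (1 / (2 * η) * ∑ i, (u i * b T i) ^ 2 + η) := by
  intro u
  have hcoord (j : Fin d) : ∑ t ∈ Icc 1 T, ℓ' t j * (w t j - u j) ≤
      √d * L * √(T + 1) * (u j * b T j) ^ 2 / (2 * η) + η * L * √(T + 1) / √d := by
    have hbj := fun t ht => hb t ht j
    refine sum_mul_sub_le_adaptive hL hη (by simp [j.pos]) _ _ _
      (fun t ht => nonneg_of_isGreatest hbj ht)
      (le_of_isGreatest hbj) (fun t ht => ?_) (fun t ht => ?_)
    · rw [hℓ' t ht, Pi.smul_apply, smul_eq_mul, abs_mul]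
      exact mul_le_mul (abs_le_of_forall_le_add_mul_sub (hsub t ht) (hlip (y t)))
        (abs_le_of_isGreatest hbj ht) (abs_nonneg _) hL.le
    · rw [hw t ht j, eq_neg_smul_prefixSum hθ1 hθ t (by simp at ht ⊢; omega)]
      simp [prefixSum, adaptiveScale, Finset.sum_apply]
  calc ∑ t ∈ Icc 1 T, loss (w t ⬝ᵥ x t) (y t) - ∑ t ∈ Icc 1 T, loss (u ⬝ᵥ x t) (y t)
      ≤ ∑ t ∈ Icc 1 T, ∑ j, ℓ' t j * (w t j - u j) := by
        rw [← sum_sub_distrib]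
        refine sum_le_sum fun t ht => ?_
        simpa [hℓ' t ht, dotProduct] using sub_le_smul_dotProduct_sub (u := u) (hsub t ht)
    _ = ∑ j, ∑ t ∈ Icc 1 T, ℓ' t j * (w t j - u j) := sum_comm
    _ ≤ ∑ j, (√d * L * √(T + 1) * (u j * b T j) ^ 2 / (2 * η) + η * L * √(T + 1) / √d) :=
        sum_le_sum fun j _ => hcoord j
    _ = L * √(d * (T + 1)) * (1 / (2 * η) * ∑ i, (u i * b T i) ^ 2 + η) := by
        rw [sum_add_distrib, sum_const, card_univ, Fintype.card_fin, nsmul_eq_mul, ← sum_div,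
          ← mul_sum, Real.sqrt_mul (Nat.cast_nonneg d), mul_div_assoc', mul_div_right_comm _ _ √_,
          Real.div_sqrt]
        ring

/-- Theorem 1, second bound: scale-invariant OMD with the adaptive
per-coordinate regularizer (regularizer of type (11)).  All quantities of the
algorithm are given explicitly through defining hypotheses; divisions by zero in Lean
equal zero, which realizes the convention `0/0 = 0`. -/
theorem stmt_9 {d T : ℕ} (hT : 1 ≤ T)
    (L η : ℝ) (hL : 0 < L) (hη : 0 < η)
    (loss : ℝ → ℝ → ℝ)
    (hconv : ∀ y : ℝ, ConvexOn ℝ Set.univ fun z => loss z y)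
    (hlip : ∀ y z z' : ℝ, |loss z y - loss z' y| ≤ L * |z - z'|)
    (x : ℕ → Fin d → ℝ) (y : ℕ → ℝ)
    -- b t i = max over s ≤ t of |x_{s,i}|
    (b : ℕ → Fin d → ℝ)
    (hb : ∀ t ∈ Icc 1 T, ∀ i, IsGreatest {r | ∃ s ∈ Icc 1 t, r = |x s i|} (b t i))
    -- subgradients: ℓ'_t = g_t x_t with g_t a subderivative of loss(·, y_t) at w_tᵀx_t
    (g : ℕ → ℝ) (ℓ' θ w : ℕ → Fin d → ℝ)
    (hsub : ∀ t ∈ Icc 1 T, ∀ z : ℝ,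
      loss z (y t) ≥ loss (w t ⬝ᵥ x t) (y t) + g t * (z - w t ⬝ᵥ x t))
    (hℓ' : ∀ t ∈ Icc 1 T, ℓ' t = g t • x t)
    (hθ1 : θ 1 = 0)
    (hθ : ∀ t ∈ Icc 1 T, θ (t + 1) = θ t - η • ℓ' t)
    (hw : ∀ t ∈ Icc 1 T, ∀ j, w t j =
      if 0 < b t j then
        θ t j / (b t j ^ 2 * Real.sqrt d
          * Real.sqrt (L ^ 2 + ∑ s ∈ Icc 1 (t - 1), (ℓ' s j / b s j) ^ 2))
      else 0) :
    ∀ u : Fin d → ℝ,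
      ∑ t ∈ Icc 1 T, loss (w t ⬝ᵥ x t) (y t)
          - ∑ t ∈ Icc 1 T, loss (u ⬝ᵥ x t) (y t) ≤
        L * Real.sqrt (d * ((T : ℝ) + 1))
          * (1 / (2 * η) * ∑ i, (u i * b T i) ^ 2 + η) :=
  stmt_9_general L η hL hη loss hlip x y b hb g ℓ' θ w hsub hℓ' hθ1 hθ hw
end
end

section
/- Let x_1,…,x_T ∈ ℝ^d and r > 0, and for each t let D_t be the d×d diagonal matrix with entries (D_t)_{ii} = 1 + (1/r) Σ_{s=1}^t x_{s,i}². Then Σ_{t=1}^T x_tᵀ D_t^{−1} x_t ≤ r Σ_{i=1}^d ln( (1/r) Σ_{t=1}^T x_{t,i}² + 1 ). -/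
open Finset Matrix
open scoped BigOperators

noncomputable section

/-! Coordinatewise, the `i`-th summand is `r · a_t / (r + S_t)` with `a_t = x_{t,i}²` and partial
sums `S_t = a_1 + ⋯ + a_t`. Since `1 - 1/y ≤ log y`, each such term is at most
`log (r + S_t) - log (r + S_{t-1})`, and these increments telescope to `log (S_T / r + 1)`. -/

theorem Matrix.inv_diagonal_of_ne_zero {n 𝕜 : Type*} [Fintype n] [DecidableEq n] [Field 𝕜]
    {w : n → 𝕜} (hw : ∀ i, w i ≠ 0) : (diagonal w)⁻¹ = diagonal w⁻¹ :=
  inv_eq_right_inv <| by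
    rw [diagonal_mul_diagonal, ← diagonal_one]
    exact congrArg diagonal (funext fun i => mul_inv_cancel₀ (hw i))

theorem Matrix.dotProduct_inv_diagonal_mulVec {n 𝕜 : Type*} [Fintype n] [DecidableEq n]
    [Field 𝕜] {w : n → 𝕜} (hw : ∀ i, w i ≠ 0) (v : n → 𝕜) :
    v ⬝ᵥ ((diagonal w)⁻¹ *ᵥ v) = ∑ i, v i ^ 2 / w i := by
  rw [inv_diagonal_of_ne_zero hw, dotProduct]
  refine sum_congr rfl fun i _ => ?_
  rw [mulVec_diagonal, Pi.inv_apply]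
  ring

theorem Real.div_add_le_log_add_sub_log {a b : ℝ} (ha : 0 < a) (hb : 0 ≤ b) :
    b / (a + b) ≤ Real.log (a + b) - Real.log a := by
  have hab : 0 < a + b := by linarith
  have h := Real.one_sub_inv_le_log_of_pos (div_pos hab ha)
  rwa [Real.log_div hab.ne' ha.ne', inv_div, one_sub_div hab.ne', add_sub_cancel_left] at h

theorem Real.sum_div_add_partialSum_le_log_sub_log {a : ℕ → ℝ} (ha : ∀ t, 0 ≤ a t) {r : ℝ}
    (hr : 0 < r) (T : ℕ) :
    ∑ t ∈ Icc 1 T, a t / (r + ∑ s ∈ Icc 1 t, a s) ≤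
      Real.log (r + ∑ t ∈ Icc 1 T, a t) - Real.log r := by
  induction T with
  | zero => simp
  | succ T ih =>
    have hS : 0 < r + ∑ s ∈ Icc 1 T, a s := by
      have := sum_nonneg fun s (_ : s ∈ Icc 1 T) => ha s
      linarith
    have hstep := Real.div_add_le_log_add_sub_log hS (ha (T + 1))
    rw [sum_Icc_succ_top (Nat.le_add_left 1 T), sum_Icc_succ_top (Nat.le_add_left 1 T),
      ← add_assoc]
    linarith

/-- Lemma 4: the diagonal log-determinant style bound.
`D t` is the diagonal matrix with entries `1 + (1/r) Σ_{s=1}^t x_{s,i}²`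
(the diagonal of `I + (1/r) Σ_{s≤t} x_s x_sᵀ`). -/
theorem stmt_13 {d T : ℕ} (x : ℕ → Fin d → ℝ) (r : ℝ) (hr : 0 < r)
    (D : ℕ → Matrix (Fin d) (Fin d) ℝ)
    (hD : ∀ t ∈ Icc 1 T,
      D t = Matrix.diagonal fun i => 1 + 1 / r * ∑ s ∈ Icc 1 t, x s i ^ 2) :
    ∑ t ∈ Icc 1 T, x t ⬝ᵥ ((D t)⁻¹ *ᵥ x t) ≤
      r * ∑ i, Real.log (1 / r * ∑ t ∈ Icc 1 T, x t i ^ 2 + 1) := by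
  have hS : ∀ i t, 0 ≤ ∑ s ∈ Icc 1 t, x s i ^ 2 := fun i t => sum_nonneg fun s _ => sq_nonneg _
  have hterm : ∀ t ∈ Icc 1 T, x t ⬝ᵥ ((D t)⁻¹ *ᵥ x t) =
      ∑ i, r * (x t i ^ 2 / (r + ∑ s ∈ Icc 1 t, x s i ^ 2)) := by
    intro t ht
    rw [hD t ht, dotProduct_inv_diagonal_mulVec fun i => by have := hS i t; positivity]
    refine sum_congr rfl fun i _ => ?_
    have := hS i t
    field_simp
  have hlog : ∀ i, Real.log (1 / r * ∑ t ∈ Icc 1 T, x t i ^ 2 + 1) =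
      Real.log (r + ∑ t ∈ Icc 1 T, x t i ^ 2) - Real.log r := fun i => by
    rw [← Real.log_div (by have := hS i T; positivity) hr.ne']
    congr 1
    field_simp
    ring
  rw [sum_congr rfl hterm, sum_comm, mul_sum]
  simp_rw [← mul_sum, hlog]
  gcongr with i
  exact Real.sum_div_add_partialSum_le_log_sub_log (fun t => sq_nonneg (x t i)) hr T
end
end

section
/- For all real numbers a, b, c, d, x > 0 and every n > 1, if x ≤ a ln(bx + c) + d, then x ≤ (n/(n−1)) · ( a ln(nab/e) + d ) + (c/b) · (1/(n−1)). -/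
/-!
The tangent line of `log` at `m = n a b` gives `a log y ≤ y / (n b) + a log (n a b / e)`.
Applied to `y = b x + c`, the hypothesis becomes `x ≤ x / n + c / (n b) + a log (n a b / e) + d`,
a linear self-bound in which `x` carries the factor `1 / n < 1`; solving it for `x` gives the claim.
-/

namespace Real

theorem log_le_div_add_log_div_exp {y m : ℝ} (hy : 0 < y) (hm : 0 < m) :
    log y ≤ y / m + log (m / exp 1) := by
  have h := log_le_sub_one_of_pos (div_pos hy hm)
  rw [log_div hy.ne' hm.ne'] at h
  rw [log_div hm.ne' (exp_ne_zero 1), log_exp]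
  linarith

end Real

theorem le_div_one_sub_of_le_mul_add {θ x K : ℝ} (hθ : θ < 1) (h : x ≤ θ * x + K) :
    x ≤ K / (1 - θ) := by
  rw [le_div_iff₀ (sub_pos.mpr hθ)]
  linarith

theorem stmt_14_general (a b c d x n : ℝ) (ha : 0 < a) (hb : 0 < b) (hc : 0 < c)
    (hx : 0 < x) (hn : 1 < n)
    (h : x ≤ a * Real.log (b * x + c) + d) :
    x ≤ n / (n - 1) * (a * Real.log (n * a * b / Real.exp 1) + d)
      + c / b * (1 / (n - 1)) := by
  have hn₀ : 0 < n := by linarith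
  set T := a * Real.log (n * a * b / Real.exp 1) + d
  have hself : x ≤ n⁻¹ * x + (c / (n * b) + T) :=
    calc x ≤ a * Real.log (b * x + c) + d := h
      _ ≤ a * ((b * x + c) / (n * a * b) + Real.log (n * a * b / Real.exp 1)) + d := by
        gcongr
        exact Real.log_le_div_add_log_div_exp (by positivity) (by positivity)
      _ = n⁻¹ * x + (c / (n * b) + T) := by
        simp only [T]
        field_simp
        ring
  calc x ≤ (c / (n * b) + T) / (1 - n⁻¹) :=
        le_div_one_sub_of_le_mul_add (inv_lt_one_of_one_lt₀ hn) hself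
    _ = n / (n - 1) * T + c / b * (1 / (n - 1)) := by
        have : n - 1 ≠ 0 := by linarith
        field_simp
        ring

/-- Corollary 3: solving the implicit logarithmic inequality
`x ≤ a ln(bx + c) + d`. -/
theorem stmt_14 (a b c d x n : ℝ) (ha : 0 < a) (hb : 0 < b) (hc : 0 < c)
    (hd : 0 < d) (hx : 0 < x) (hn : 1 < n)
    (h : x ≤ a * Real.log (b * x + c) + d) :
    x ≤ n / (n - 1) * (a * Real.log (n * a * b / Real.exp 1) + d)
      + c / b * (1 / (n - 1)) :=
  stmt_14_general a b c d x n ha hb hc hx hn h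
end

section
/- For all real numbers a, b, c, d, x > 0, if x ≤ √(a ln(bx + 1) + c) + d, then x ≤ √( a ln( √8 · a b²/e + 2b√c + 2db + 2 ) + c ) + d. -/
/-!
If `x ≤ d` there is nothing to prove. Otherwise squaring and `log (1 + t) ≤ t` turn the
hypothesis into the quadratic inequality `x² ≤ (ab + 2d) x + c`, whence `x ≤ ab + 2d + √c`.
Feeding this back into the logarithm bounds `b x + 1` by the argument of the logarithm in the
conclusion, using `e ≤ √8`, and `log` and `√` are monotone.
-/

open Real

lemma le_add_sqrt_of_sq_le_mul_add {x p q : ℝ} (hp : 0 ≤ p) (h : x ^ 2 ≤ p * x + q) :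
    x ≤ p + √q := by
  by_contra! hlt
  have hsq : √q ^ 2 = max q 0 := sq_sqrt'
  nlinarith [sqrt_nonneg q, le_max_left q 0]

lemma exp_one_le_sqrt_eight : exp 1 ≤ √8 := by
  rw [le_sqrt (exp_pos 1).le (by norm_num)]
  nlinarith [exp_one_lt_d9, exp_pos 1]

lemma le_mul_add_two_mul_add_sqrt_of_le_sqrt_log {a b c d x : ℝ} (ha : 0 ≤ a) (hb : 0 ≤ b)
    (hd : 0 ≤ d) (hdx : d < x) (h : x ≤ √(a * log (b * x + 1) + c) + d) :
    x ≤ a * b + 2 * d + √c := by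
  have hsq : (x - d) ^ 2 ≤ a * log (b * x + 1) + c :=
    (le_sqrt' (by linarith)).1 (by linarith)
  have hlog : log (b * x + 1) ≤ b * x := by
    linarith [log_le_sub_one_of_pos (by nlinarith : 0 < b * x + 1)]
  apply le_add_sqrt_of_sq_le_mul_add (by positivity)
  nlinarith [mul_le_mul_of_nonneg_left hlog ha]

theorem stmt_15_general (a b c d x : ℝ) (ha : 0 < a) (hb : 0 < b)
    (hd : 0 < d)
    (h : x ≤ Real.sqrt (a * Real.log (b * x + 1) + c) + d) :
    x ≤ Real.sqrt (a * Real.log (Real.sqrt 8 * a * b ^ 2 / Real.exp 1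
          + 2 * b * Real.sqrt c + 2 * d * b + 2) + c) + d := by
  set M := √8 * a * b ^ 2 / exp 1 + 2 * b * √c + 2 * d * b + 2
  rcases le_or_gt x d with hxd | hdx
  · linarith [sqrt_nonneg (a * log M + c)]
  have hx : x ≤ a * b + 2 * d + √c :=
    le_mul_add_two_mul_add_sqrt_of_le_sqrt_log ha.le hb.le hd.le hdx h
  have hab : a * b ^ 2 ≤ √8 * a * b ^ 2 / exp 1 := by
    rw [le_div_iff₀ (exp_pos 1)]
    nlinarith [mul_le_mul_of_nonneg_left exp_one_le_sqrt_eight (by positivity : 0 ≤ a * b ^ 2)]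
  have hbx : b * x + 1 ≤ M := by
    nlinarith [mul_le_mul_of_nonneg_left hx hb.le, mul_nonneg hb.le (sqrt_nonneg c)]
  have hlog : a * log (b * x + 1) ≤ a * log M :=
    mul_le_mul_of_nonneg_left (log_le_log (by nlinarith) hbx) ha.le
  linarith [sqrt_le_sqrt (add_le_add_left hlog c)]

/-- Corollary 4: solving the implicit square-root-logarithmic
inequality `x ≤ √(a ln(bx + 1) + c) + d`. -/
theorem stmt_15 (a b c d x : ℝ) (ha : 0 < a) (hb : 0 < b) (hc : 0 < c)
    (hd : 0 < d) (hx : 0 < x)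
    (h : x ≤ Real.sqrt (a * Real.log (b * x + 1) + c) + d) :
    x ≤ Real.sqrt (a * Real.log (Real.sqrt 8 * a * b ^ 2 / Real.exp 1
          + 2 * b * Real.sqrt c + 2 * d * b + 2) + c) + d :=
  stmt_15_general a b c d x ha hb hd h
end

section
/- Let (x_1,y_1),…,(x_T,y_T) ∈ ℝ^d×ℝ and a > 0. Define A_0 = aI and A_t = A_{t−1} + x_t x_tᵀ for t ≥ 1, and let the Vovk-Azoury-Warmuth predictor be w_t = A_t^{−1} Σ_{s=1}^{t−1} y_s x_s. Then for every u ∈ ℝ^d: (1/2) Σ_{t=1}^T (y_t − w_tᵀx_t)² − (1/2) Σ_{t=1}^T (y_t − uᵀx_t)² ≤ (a/2)‖u‖² + (Y²/2) Σ_{t=1}^T x_tᵀ A_t^{−1} x_t, where Y = max_{t ≤ T} |y_t| and ‖·‖ is the Euclidean norm. -/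
/-!
With `b_t = ∑_{s ≤ t} y_s x_s`, the potential `∑_{s ≤ t} y_s² - b_tᵀ A_t⁻¹ b_t` is the minimum over
`u` of the regularised loss `a‖u‖² + ∑_{s ≤ t} (y_s - uᵀx_s)²`; at time `T` it is therefore bounded
by the comparator's regularised loss. By the Sherman–Morrison formula, the forecaster's loss
`(y_t - w_tᵀx_t)²` exceeds the increment of the potential at step `t` by at most
`y_t² x_tᵀA_t⁻¹x_t`. Summing over `t` (the potential starts at `0`) gives the bound.
-/

open Finset Matrix

namespace Matrix

variable {n : Type*} [Fintype n]

lemma IsHermitian.dotProduct_mulVec_comm {M : Matrix n n ℝ} (hM : M.IsHermitian) (u v : n → ℝ) :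
    u ⬝ᵥ M *ᵥ v = v ⬝ᵥ M *ᵥ u := by
  rw [dotProduct_mulVec, ← mulVec_transpose, ← conjTranspose_eq_transpose_of_trivial, hM,
    dotProduct_comm]

lemma PosDef.add_vecMulVec_self {B : Matrix n n ℝ} (hB : B.PosDef) (x : n → ℝ) :
    (B + vecMulVec x x).PosDef :=
  hB.add_posSemidef (by simpa using posSemidef_vecMulVec_self_star x)

variable [DecidableEq n]

lemma PosDef.mulVec_inv_mulVec {M : Matrix n n ℝ} (hM : M.PosDef) (v : n → ℝ) :
    M *ᵥ M⁻¹ *ᵥ v = v := by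
  rw [mulVec_mulVec, mul_nonsing_inv _ ((isUnit_iff_isUnit_det M).mp hM.isUnit), one_mulVec]

lemma PosDef.inv_mulVec_mulVec {M : Matrix n n ℝ} (hM : M.PosDef) (v : n → ℝ) :
    M⁻¹ *ᵥ M *ᵥ v = v := by
  rw [mulVec_mulVec, nonsing_inv_mul _ ((isUnit_iff_isUnit_det M).mp hM.isUnit), one_mulVec]

lemma PosDef.dotProduct_inv_mulVec_self_nonneg {M : Matrix n n ℝ} (hM : M.PosDef) (x : n → ℝ) :
    0 ≤ x ⬝ᵥ M⁻¹ *ᵥ x := by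
  simpa using hM.inv.posSemidef.dotProduct_mulVec_nonneg x

/-- Sherman–Morrison, applied to a vector. -/
lemma PosDef.inv_add_vecMulVec_self_mulVec {B : Matrix n n ℝ} (hB : B.PosDef) (x b : n → ℝ) :
    (B + vecMulVec x x)⁻¹ *ᵥ b =
      B⁻¹ *ᵥ b - ((x ⬝ᵥ B⁻¹ *ᵥ b) / (1 + x ⬝ᵥ B⁻¹ *ᵥ x)) • B⁻¹ *ᵥ x := by
  set s := x ⬝ᵥ B⁻¹ *ᵥ x
  set c := x ⬝ᵥ B⁻¹ *ᵥ b
  have hs : 1 + s ≠ 0 := by linarith [hB.dotProduct_inv_mulVec_self_nonneg x]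
  have hcs : c / (1 + s) * s = c - c / (1 + s) := by
    field_simp
    ring
  set v := B⁻¹ *ᵥ b - (c / (1 + s)) • B⁻¹ *ᵥ x
  have hv : (B + vecMulVec x x) *ᵥ v = b := by
    rw [add_mulVec, vecMulVec_mulVec, mulVec_sub, mulVec_smul, hB.mulVec_inv_mulVec,
      hB.mulVec_inv_mulVec, dotProduct_sub, dotProduct_smul, op_smul_eq_smul, smul_eq_mul]
    linear_combination (norm := module) -(hcs • x)
  conv_lhs => rw [← hv]
  exact (hB.add_vecMulVec_self x).inv_mulVec_mulVec v

lemma PosDef.dotProduct_inv_add_vecMulVec_self_mulVec {B : Matrix n n ℝ} (hB : B.PosDef)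
    (x p b : n → ℝ) :
    p ⬝ᵥ (B + vecMulVec x x)⁻¹ *ᵥ b =
      p ⬝ᵥ B⁻¹ *ᵥ b - (p ⬝ᵥ B⁻¹ *ᵥ x) * (x ⬝ᵥ B⁻¹ *ᵥ b) / (1 + x ⬝ᵥ B⁻¹ *ᵥ x) := by
  rw [hB.inv_add_vecMulVec_self_mulVec, dotProduct_sub, dotProduct_smul, smul_eq_mul]
  ring

lemma PosDef.two_mul_dotProduct_sub_le {A : Matrix n n ℝ} (hA : A.PosDef) (u b : n → ℝ) :
    2 * (u ⬝ᵥ b) - u ⬝ᵥ A *ᵥ u ≤ b ⬝ᵥ A⁻¹ *ᵥ b := by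
  have h := hA.posSemidef.dotProduct_mulVec_nonneg (u - A⁻¹ *ᵥ b)
  rw [star_trivial, mulVec_sub, hA.mulVec_inv_mulVec, dotProduct_sub, sub_dotProduct,
    sub_dotProduct, hA.isHermitian.dotProduct_mulVec_comm (A⁻¹ *ᵥ b) u, hA.mulVec_inv_mulVec,
    dotProduct_comm (A⁻¹ *ᵥ b) b] at h
  linarith

end Matrix

namespace VovkAzouryWarmuth

variable {n : Type*}

def crossMoment (x : ℕ → n → ℝ) (y : ℕ → ℝ) (t : ℕ) : n → ℝ := ∑ s ∈ Icc 1 t, y s • x s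

lemma crossMoment_succ (x : ℕ → n → ℝ) (y : ℕ → ℝ) (t : ℕ) :
    crossMoment x y (t + 1) = crossMoment x y t + y (t + 1) • x (t + 1) :=
  sum_Icc_succ_top (by omega) _

variable [Fintype n]

lemma dotProduct_crossMoment (x : ℕ → n → ℝ) (y : ℕ → ℝ) (t : ℕ) (u : n → ℝ) :
    u ⬝ᵥ crossMoment x y t = ∑ s ∈ Icc 1 t, y s * (u ⬝ᵥ x s) := by
  simp only [crossMoment, dotProduct_sum, dotProduct_smul, smul_eq_mul]

variable [DecidableEq n]

lemma sq_loss_le_potential_step {B : Matrix n n ℝ} (hB : B.PosDef) (x b : n → ℝ) (y : ℝ) :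
    (y - ((B + vecMulVec x x)⁻¹ *ᵥ b) ⬝ᵥ x) ^ 2
        + ((b + y • x) ⬝ᵥ (B + vecMulVec x x)⁻¹ *ᵥ (b + y • x) - b ⬝ᵥ B⁻¹ *ᵥ b) ≤
      y ^ 2 + y ^ 2 * (x ⬝ᵥ (B + vecMulVec x x)⁻¹ *ᵥ x) := by
  have hSM := hB.dotProduct_inv_add_vecMulVec_self_mulVec x
  set s := x ⬝ᵥ B⁻¹ *ᵥ x
  set c := x ⬝ᵥ B⁻¹ *ᵥ b
  have hs : 0 ≤ s := hB.dotProduct_inv_mulVec_self_nonneg x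
  have hc : b ⬝ᵥ B⁻¹ *ᵥ x = c := hB.inv.isHermitian.dotProduct_mulVec_comm b x
  obtain ⟨k, hk⟩ : ∃ k, c / (1 + s) = k := ⟨_, rfl⟩
  have hck : c = k * (1 + s) := by rw [← hk, div_mul_cancel₀ c (by positivity)]
  have hxb : x ⬝ᵥ (B + vecMulVec x x)⁻¹ *ᵥ b = k := by
    rw [hSM, mul_div_assoc, hk]
    linear_combination hck
  have hbx : b ⬝ᵥ (B + vecMulVec x x)⁻¹ *ᵥ x = k := by
    rw [(hB.add_vecMulVec_self x).inv.isHermitian.dotProduct_mulVec_comm, hxb]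
  have hbb : b ⬝ᵥ (B + vecMulVec x x)⁻¹ *ᵥ b = b ⬝ᵥ B⁻¹ *ᵥ b - c * k := by
    rw [hSM, hc, mul_div_assoc, hk]
  -- `k` is the prediction; the slack of the inequality is `c k - k ^ 2 = k ^ 2 s`
  have hkc : k ^ 2 ≤ c * k := by linear_combination (-k) * hck + mul_nonneg (sq_nonneg k) hs
  rw [mulVec_add, mulVec_smul, dotProduct_add, add_dotProduct, add_dotProduct, dotProduct_smul,
    dotProduct_smul, smul_dotProduct, smul_dotProduct, dotProduct_comm _ x, hxb, hbx, hbb]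
  simp only [smul_eq_mul]
  linear_combination hkc

variable {x : ℕ → n → ℝ} {a : ℝ} {A : ℕ → Matrix n n ℝ} {T : ℕ}

lemma posDef (ha : 0 < a) (hA0 : A 0 = a • 1)
    (hA : ∀ t < T, A (t + 1) = A t + vecMulVec (x (t + 1)) (x (t + 1))) : (A T).PosDef := by
  induction T with
  | zero => exact hA0 ▸ PosDef.one.smul ha
  | succ T ih =>
    rw [hA T T.lt_add_one]
    exact (ih fun t ht => hA t (by omega)).add_vecMulVec_self _

lemma dotProduct_mulVec_self (hA0 : A 0 = a • 1)
    (hA : ∀ t < T, A (t + 1) = A t + vecMulVec (x (t + 1)) (x (t + 1))) (u : n → ℝ) :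
    u ⬝ᵥ A T *ᵥ u = a * (u ⬝ᵥ u) + ∑ t ∈ Icc 1 T, (u ⬝ᵥ x t) ^ 2 := by
  induction T with
  | zero => simp [hA0, smul_mulVec, dotProduct_smul]
  | succ T ih =>
    rw [hA T T.lt_add_one, add_mulVec, dotProduct_add, ih fun t ht => hA t (by omega),
      sum_Icc_succ_top (by omega), vecMulVec_mulVec, op_smul_eq_smul, dotProduct_smul,
      smul_eq_mul, dotProduct_comm (x _) u]
    ring

lemma sum_sq_sub_add_eq (hA0 : A 0 = a • 1)
    (hA : ∀ t < T, A (t + 1) = A t + vecMulVec (x (t + 1)) (x (t + 1))) (y : ℕ → ℝ)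
    (u : n → ℝ) :
    ∑ t ∈ Icc 1 T, (y t - u ⬝ᵥ x t) ^ 2 + a * (u ⬝ᵥ u) =
      ∑ t ∈ Icc 1 T, y t ^ 2 - 2 * (u ⬝ᵥ crossMoment x y T) + u ⬝ᵥ A T *ᵥ u := by
  have hsq (t : ℕ) : (y t - u ⬝ᵥ x t) ^ 2 = y t ^ 2 - 2 * (y t * (u ⬝ᵥ x t)) + (u ⬝ᵥ x t) ^ 2 := by
    ring
  rw [dotProduct_mulVec_self hA0 hA, dotProduct_crossMoment, mul_sum]
  simp only [hsq, sum_add_distrib, sum_sub_distrib]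
  ring

lemma sum_sq_loss_add_potential_le (ha : 0 < a) (hA0 : A 0 = a • 1)
    (hA : ∀ t < T, A (t + 1) = A t + vecMulVec (x (t + 1)) (x (t + 1))) (y : ℕ → ℝ) :
    ∑ t ∈ Icc 1 T, (y t - ((A t)⁻¹ *ᵥ crossMoment x y (t - 1)) ⬝ᵥ x t) ^ 2
        + crossMoment x y T ⬝ᵥ (A T)⁻¹ *ᵥ crossMoment x y T ≤
      ∑ t ∈ Icc 1 T, (y t ^ 2 + y t ^ 2 * (x t ⬝ᵥ (A t)⁻¹ *ᵥ x t)) := by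
  induction T with
  | zero => simp [crossMoment]
  | succ T ih =>
    have hAT : ∀ t < T, A (t + 1) = A t + vecMulVec (x (t + 1)) (x (t + 1)) :=
      fun t ht => hA t (by omega)
    have hstep := sq_loss_le_potential_step (posDef ha hA0 hAT) (x (T + 1))
      (crossMoment x y T) (y (T + 1))
    rw [← hA T T.lt_add_one, ← crossMoment_succ] at hstep
    rw [sum_Icc_succ_top (by omega), sum_Icc_succ_top (by omega), Nat.add_sub_cancel]
    linarith [ih hAT]

end VovkAzouryWarmuth

open VovkAzouryWarmuth in
theorem stmt_16_general {d T : ℕ}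
    (x : ℕ → Fin d → ℝ) (y : ℕ → ℝ) (a : ℝ) (ha : 0 < a)
    (A : ℕ → Matrix (Fin d) (Fin d) ℝ)
    (hA0 : A 0 = a • (1 : Matrix (Fin d) (Fin d) ℝ))
    (hA : ∀ t ∈ Icc 1 T, A t = A (t - 1) + Matrix.vecMulVec (x t) (x t))
    (w : ℕ → Fin d → ℝ)
    (hw : ∀ t ∈ Icc 1 T, w t = (A t)⁻¹ *ᵥ ∑ s ∈ Icc 1 (t - 1), y s • x s)
    (Y : ℝ) (hY : IsGreatest {r | ∃ t ∈ Icc 1 T, r = |y t|} Y) :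
    ∀ u : Fin d → ℝ,
      1 / 2 * ∑ t ∈ Icc 1 T, (y t - w t ⬝ᵥ x t) ^ 2
          - 1 / 2 * ∑ t ∈ Icc 1 T, (y t - u ⬝ᵥ x t) ^ 2 ≤
        a / 2 * ∑ i, u i ^ 2
          + Y ^ 2 / 2 * ∑ t ∈ Icc 1 T, x t ⬝ᵥ ((A t)⁻¹ *ᵥ x t) := by
  intro u
  have hrec : ∀ t < T, A (t + 1) = A t + vecMulVec (x (t + 1)) (x (t + 1)) := fun t ht => by
    simpa using hA (t + 1) (mem_Icc.2 ⟨by omega, by omega⟩)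
  have hloss : ∑ t ∈ Icc 1 T, (y t - w t ⬝ᵥ x t) ^ 2 =
      ∑ t ∈ Icc 1 T, (y t - ((A t)⁻¹ *ᵥ crossMoment x y (t - 1)) ⬝ᵥ x t) ^ 2 :=
    sum_congr rfl fun t ht => by rw [hw t ht, crossMoment]
  have hcomparator := sum_sq_sub_add_eq hA0 hrec y u
  have hnorm : ∑ i, u i ^ 2 = u ⬝ᵥ u := by simp only [dotProduct, sq]
  have hY2 : ∑ t ∈ Icc 1 T, y t ^ 2 * (x t ⬝ᵥ (A t)⁻¹ *ᵥ x t) ≤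
      Y ^ 2 * ∑ t ∈ Icc 1 T, x t ⬝ᵥ (A t)⁻¹ *ᵥ x t := by
    rw [mul_sum]
    refine sum_le_sum fun t ht => mul_le_mul_of_nonneg_right ?_ ?_
    · exact sq_le_sq.2 ((hY.2 ⟨t, ht, rfl⟩).trans (le_abs_self Y))
    · have hrec_t : ∀ s < t, A (s + 1) = A s + vecMulVec (x (s + 1)) (x (s + 1)) :=
        fun s hs => hrec s (hs.trans_le (mem_Icc.1 ht).2)
      exact (posDef ha hA0 hrec_t).dotProduct_inv_mulVec_self_nonneg _
  have hminimum := (posDef ha hA0 hrec).two_mul_dotProduct_sub_le u (crossMoment x y T)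
  have hcum := sum_sq_loss_add_potential_le ha hA0 hrec y
  rw [sum_add_distrib] at hcum
  rw [hloss, hnorm]
  linarith

/-- regret bound for the Vovk-Azoury-Warmuth forecaster for online
regression with the square loss.  `A_0 = aI`, `A_t = A_{t-1} + x_t x_tᵀ`, the
predictor is `w_t = A_t⁻¹ Σ_{s<t} y_s x_s`, `Y = max_{t ≤ T} |y_t|`, and `‖u‖` is the
Euclidean norm (so `‖u‖² = Σ_i u_i²`). -/
theorem stmt_16 {d T : ℕ} (hT : 1 ≤ T)
    (x : ℕ → Fin d → ℝ) (y : ℕ → ℝ) (a : ℝ) (ha : 0 < a)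
    (A : ℕ → Matrix (Fin d) (Fin d) ℝ)
    (hA0 : A 0 = a • (1 : Matrix (Fin d) (Fin d) ℝ))
    (hA : ∀ t ∈ Icc 1 T, A t = A (t - 1) + Matrix.vecMulVec (x t) (x t))
    (w : ℕ → Fin d → ℝ)
    (hw : ∀ t ∈ Icc 1 T, w t = (A t)⁻¹ *ᵥ ∑ s ∈ Icc 1 (t - 1), y s • x s)
    (Y : ℝ) (hY : IsGreatest {r | ∃ t ∈ Icc 1 T, r = |y t|} Y) :
    ∀ u : Fin d → ℝ,
      1 / 2 * ∑ t ∈ Icc 1 T, (y t - w t ⬝ᵥ x t) ^ 2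
          - 1 / 2 * ∑ t ∈ Icc 1 T, (y t - u ⬝ᵥ x t) ^ 2 ≤
        a / 2 * ∑ i, u i ^ 2
          + Y ^ 2 / 2 * ∑ t ∈ Icc 1 T, x t ⬝ᵥ ((A t)⁻¹ *ᵥ x t) :=
  stmt_16_general x y a ha A hA0 hA w hw Y hY
end

section
/- Let (x_t,y_t) ∈ ℝ^d×{−1,+1} for t = 1,…,T, fix r > 0, and define the second-order algorithm: θ_1 = 0, A_0 = I; at step t set Ã_t = A_{t−1} + (1/r) x_t x_tᵀ and w_t = Ã_t^{−1} θ_t; if ℓ_t(w_t) > 0 set θ_{t+1} = θ_t + y_t x_t and A_t = Ã_t, otherwise θ_{t+1} = θ_t and A_t = A_{t−1}. Let m_t = θ_tᵀ A_{t−1}^{−1} x_t, χ_t = x_tᵀ A_{t−1}^{−1} x_t, and V = M ∪ U = {t ≤ T : ℓ_t(w_t) > 0}. Then for every u ∈ ℝ^d: M + U − L(u) ≤ √( r‖u‖² + Σ_{t∈V} (uᵀx_t)² ) · √( max{0, ln det(A_T) + Σ_{t∈V} m_t (2r y_t − m_t)/( r(r + χ_t) )} ), where ‖·‖ is the Euclidean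 norm. -/
/-!
Let `Φ_t = θ_{t+1}ᵀ A_t⁻¹ θ_{t+1}`. It changes only on update steps, where the Sherman–Morrison
formula shows that it grows by `r χ / (r + χ) + m (2 r y - m) / (r + χ)`. The matrix determinant
lemma gives `det A_t = det A_{t-1} (1 + χ / r)`, and `χ / (r + χ) ≤ log (1 + χ / r)`, so `Φ_T / r`
is bounded by the log-determinant expression of the statement. On the other hand
`θ_{T+1} = ∑_{t ∈ V} y_t x_t`, so the hinge loss bounds `|V| - L(u)` by `⟨u, θ_{T+1}⟩`, and
Cauchy–Schwarz for the pair of forms `A_T`, `A_T⁻¹` bounds this by `√(uᵀ A_T u) √Φ_T`, where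
`r uᵀ A_T u = r ‖u‖² + ∑_{t ∈ V} ⟨u, x_t⟩²`.
-/

open Finset Matrix

namespace Matrix

section CommRing
variable {n α : Type*} [Fintype n] [DecidableEq n] [CommRing α]

theorem det_add_vecMulVec {A : Matrix n n α} (hA : IsUnit A.det) (u v : n → α) :
    (A + vecMulVec u v).det = A.det * (1 + v ⬝ᵥ (A⁻¹ *ᵥ u)) := by
  rw [vecMulVec_eq Unit, det_add_replicateCol_mul_replicateRow hA, det_unique (n := Unit),
    dotProduct_mulVec]
  simp [replicateRow, replicateCol, mul_apply, dotProduct, vecMul, Finset.sum_mul]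

end CommRing

section Field
variable {n K : Type*} [Fintype n] [DecidableEq n] [Field K]

theorem inv_add_vecMulVec {A : Matrix n n K} (hA : IsUnit A.det) (u v : n → K)
    (hu : 1 + v ⬝ᵥ (A⁻¹ *ᵥ u) ≠ 0) :
    (A + vecMulVec u v)⁻¹
      = A⁻¹ - (1 + v ⬝ᵥ (A⁻¹ *ᵥ u))⁻¹ • vecMulVec (A⁻¹ *ᵥ u) (v ᵥ* A⁻¹) := by
  apply inv_eq_right_inv
  have hAA : A * A⁻¹ = 1 := mul_nonsing_inv A hA
  rw [Matrix.add_mul, Matrix.mul_sub, Matrix.mul_sub, hAA, Matrix.mul_smul, Matrix.mul_smul,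
    mul_vecMulVec, mulVec_mulVec, hAA, one_mulVec, vecMulVec_mul, vecMulVec_mul_vecMulVec,
    vecMulVec_smul]
  set χ := v ⬝ᵥ (A⁻¹ *ᵥ u)
  set W := vecMulVec u (v ᵥ* A⁻¹)
  have hc : (1 + χ)⁻¹ * (1 + χ) = 1 := inv_mul_cancel₀ hu
  calc 1 - (1 + χ)⁻¹ • W + (W - (1 + χ)⁻¹ • χ • W) = 1 + (1 - (1 + χ)⁻¹ * (1 + χ)) • W := by
        module
    _ = 1 := by rw [hc, sub_self, zero_smul, add_zero]

end Field

section Real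
variable {n : Type*} [Fintype n]

theorem PosSemidef.dotProduct_mulVec_sq_le {A : Matrix n n ℝ} (hA : A.PosSemidef) (u v : n → ℝ) :
    (u ⬝ᵥ (A *ᵥ v)) ^ 2 ≤ (u ⬝ᵥ (A *ᵥ u)) * (v ⬝ᵥ (A *ᵥ v)) := by
  let := A.toSeminormedAddCommGroup hA
  let := A.toInnerProductSpace hA
  have hinner (a b : n → ℝ) : (inner ℝ a b : ℝ) = a ⬝ᵥ (A *ᵥ b) := dotProduct_comm _ _
  have h := real_inner_mul_inner_self_le u v
  simp only [hinner] at h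
  nlinarith [h]

theorem PosSemidef.dotProduct_mulVec_self_nonneg {A : Matrix n n ℝ} (hA : A.PosSemidef)
    (v : n → ℝ) : 0 ≤ v ⬝ᵥ (A *ᵥ v) := by
  simpa using hA.dotProduct_mulVec_nonneg v

variable [DecidableEq n] {A : Matrix n n ℝ}

theorem PosDef.dotProduct_le_sqrt_mul_sqrt (hA : A.PosDef) (u v : n → ℝ) :
    u ⬝ᵥ v ≤ √(u ⬝ᵥ (A *ᵥ u)) * √(v ⬝ᵥ (A⁻¹ *ᵥ v)) := by
  have hv : A *ᵥ (A⁻¹ *ᵥ v) = v := by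
    rw [mulVec_mulVec, mul_nonsing_inv _ hA.det_pos.ne'.isUnit, one_mulVec]
  have h := hA.posSemidef.dotProduct_mulVec_sq_le u (A⁻¹ *ᵥ v)
  rw [hv, dotProduct_comm (A⁻¹ *ᵥ v) v] at h
  rw [← Real.sqrt_mul (hA.posSemidef.dotProduct_mulVec_self_nonneg u)]
  exact (le_abs_self _).trans (Real.abs_le_sqrt h)

theorem PosDef.vecMul_inv (hA : A.PosDef) (v : n → ℝ) : v ᵥ* A⁻¹ = A⁻¹ *ᵥ v := by
  conv_lhs => rw [← hA.inv.isHermitian.eq, conjTranspose_eq_transpose_of_trivial, vecMul_transpose]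

theorem PosDef.dotProduct_inv_mulVec_comm (hA : A.PosDef) (u v : n → ℝ) :
    u ⬝ᵥ (A⁻¹ *ᵥ v) = v ⬝ᵥ (A⁻¹ *ᵥ u) := by
  rw [dotProduct_mulVec, hA.vecMul_inv, dotProduct_comm]

theorem PosDef.det_add_smul_vecMulVec_self (hA : A.PosDef) (c : ℝ) (x : n → ℝ) :
    (A + c • vecMulVec x x).det = A.det * (1 + c * (x ⬝ᵥ (A⁻¹ *ᵥ x))) := by
  rw [← smul_vecMulVec, det_add_vecMulVec hA.det_pos.ne'.isUnit, mulVec_smul, dotProduct_smul,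
    smul_eq_mul]

theorem PosDef.inv_add_inv_smul_vecMulVec_self (hA : A.PosDef) {r : ℝ} (hr : 0 < r)
    (x : n → ℝ) :
    (A + r⁻¹ • vecMulVec x x)⁻¹
      = A⁻¹ - (r + x ⬝ᵥ (A⁻¹ *ᵥ x))⁻¹ • vecMulVec (A⁻¹ *ᵥ x) (A⁻¹ *ᵥ x) := by
  have hχ := hA.inv.posSemidef.dotProduct_mulVec_self_nonneg x
  have hc : 1 + x ⬝ᵥ (A⁻¹ *ᵥ r⁻¹ • x) ≠ 0 := by
    rw [mulVec_smul, dotProduct_smul, smul_eq_mul]; positivity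
  rw [← smul_vecMulVec, inv_add_vecMulVec hA.det_pos.ne'.isUnit _ _ hc, hA.vecMul_inv, mulVec_smul,
    dotProduct_smul, smul_vecMulVec, smul_smul, smul_eq_mul]
  congr 2
  field_simp

theorem PosDef.dotProduct_inv_mulVec_rankOne_update (hA : A.PosDef) {r y : ℝ} (hr : 0 < r)
    (hy : y ^ 2 = 1) (θ x : n → ℝ) :
    (θ + y • x) ⬝ᵥ ((A + r⁻¹ • vecMulVec x x)⁻¹ *ᵥ (θ + y • x))
      = θ ⬝ᵥ (A⁻¹ *ᵥ θ) + r * (x ⬝ᵥ (A⁻¹ *ᵥ x)) / (r + x ⬝ᵥ (A⁻¹ *ᵥ x))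
        + θ ⬝ᵥ (A⁻¹ *ᵥ x) * (2 * r * y - θ ⬝ᵥ (A⁻¹ *ᵥ x)) / (r + x ⬝ᵥ (A⁻¹ *ᵥ x)) := by
  have hχ := hA.inv.posSemidef.dotProduct_mulVec_self_nonneg x
  rw [hA.inv_add_inv_smul_vecMulVec_self hr]
  simp only [sub_mulVec, smul_mulVec, vecMulVec_mulVec, mulVec_add, mulVec_smul, dotProduct_add,
    add_dotProduct, dotProduct_sub, dotProduct_smul, smul_dotProduct, smul_eq_mul,
    op_smul_eq_smul]
  rw [hA.dotProduct_inv_mulVec_comm x θ, dotProduct_comm (A⁻¹ *ᵥ x), dotProduct_comm (A⁻¹ *ᵥ x)]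
  generalize θ ⬝ᵥ (A⁻¹ *ᵥ x) = m at *
  generalize x ⬝ᵥ (A⁻¹ *ᵥ x) = χ at *
  field_simp
  linear_combination r * χ * hy

theorem PosDef.dotProduct_inv_mulVec_rankOne_update_le (hA : A.PosDef) {r y : ℝ} (hr : 0 < r)
    (hy : y ^ 2 = 1) (θ x : n → ℝ) :
    (θ + y • x) ⬝ᵥ ((A + r⁻¹ • vecMulVec x x)⁻¹ *ᵥ (θ + y • x)) / r
        - Real.log (A + r⁻¹ • vecMulVec x x).det
      ≤ θ ⬝ᵥ (A⁻¹ *ᵥ θ) / r - Real.log A.det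
        + θ ⬝ᵥ (A⁻¹ *ᵥ x) * (2 * r * y - θ ⬝ᵥ (A⁻¹ *ᵥ x)) / (r * (r + x ⬝ᵥ (A⁻¹ *ᵥ x))) := by
  have hχ := hA.inv.posSemidef.dotProduct_mulVec_self_nonneg x
  have hgrowth : 0 < 1 + r⁻¹ * (x ⬝ᵥ (A⁻¹ *ᵥ x)) := by positivity
  rw [hA.dotProduct_inv_mulVec_rankOne_update hr hy, hA.det_add_smul_vecMulVec_self,
    Real.log_mul hA.det_pos.ne' hgrowth.ne']
  have hlog := Real.one_sub_inv_le_log_of_pos hgrowth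
  generalize θ ⬝ᵥ (A⁻¹ *ᵥ θ) = Q
  generalize θ ⬝ᵥ (A⁻¹ *ᵥ x) = m
  generalize x ⬝ᵥ (A⁻¹ *ᵥ x) = χ at *
  have hsplit : (Q + r * χ / (r + χ) + m * (2 * r * y - m) / (r + χ)) / r
      = Q / r + (1 - (1 + r⁻¹ * χ)⁻¹) + m * (2 * r * y - m) / (r * (r + χ)) := by
    field_simp
    ring
  linarith

end Real
end Matrix

theorem Finset.eq_add_sum_filter_Icc_of_step {M : Type*} [AddCommMonoid M] {p : ℕ → Prop}
    [DecidablePred p] {f g : ℕ → M} {T : ℕ}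
    (hp : ∀ t ∈ Icc 1 T, p t → f t = f (t - 1) + g t)
    (hnp : ∀ t ∈ Icc 1 T, ¬ p t → f t = f (t - 1)) :
    f T = f 0 + ∑ t ∈ (Icc 1 T).filter p, g t := by
  induction T with
  | zero => simp
  | succ T ih =>
    have ih' := ih (fun t ht => hp t (Icc_subset_Icc_right T.le_succ ht))
      (fun t ht => hnp t (Icc_subset_Icc_right T.le_succ ht))
    have hT : T + 1 ∈ Icc 1 (T + 1) := by simp
    rw [sum_filter, sum_Icc_succ_top (by omega), ← sum_filter]
    by_cases h : p (T + 1)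
    · rw [hp _ hT h, Nat.add_sub_cancel, ih', if_pos h, add_assoc]
    · rw [hnp _ hT h, Nat.add_sub_cancel, ih', if_neg h, add_zero]

theorem Finset.le_add_sum_filter_Icc_of_step {M : Type*} [AddCommMonoid M] [PartialOrder M]
    [IsOrderedAddMonoid M] {p : ℕ → Prop} [DecidablePred p] {f g : ℕ → M} {T : ℕ}
    (hp : ∀ t ∈ Icc 1 T, p t → f t ≤ f (t - 1) + g t)
    (hnp : ∀ t ∈ Icc 1 T, ¬ p t → f t ≤ f (t - 1)) :
    f T ≤ f 0 + ∑ t ∈ (Icc 1 T).filter p, g t := by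
  induction T with
  | zero => simp
  | succ T ih =>
    have ih' := ih (fun t ht => hp t (Icc_subset_Icc_right T.le_succ ht))
      (fun t ht => hnp t (Icc_subset_Icc_right T.le_succ ht))
    have hT : T + 1 ∈ Icc 1 (T + 1) := by simp
    rw [sum_filter, sum_Icc_succ_top (by omega), ← sum_filter]
    by_cases h : p (T + 1)
    · have hstep := hp _ hT h
      rw [Nat.add_sub_cancel] at hstep
      rw [if_pos h, ← add_assoc]
      exact hstep.trans (add_le_add ih' le_rfl)
    · have hstep := hnp _ hT h
      rw [Nat.add_sub_cancel] at hstep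
      rw [if_neg h, add_zero]
      exact hstep.trans ih'

theorem card_filter_nonpos_add_card_filter_margin {ι : Type*} (s : Finset ι) (z : ι → ℝ) :
    #(s.filter fun t => z t ≤ 0) + #(s.filter fun t => 0 < z t ∧ 0 < 1 - z t)
      = #(s.filter fun t => 0 < 1 - z t) := by
  rw [← card_filter_add_card_filter_not (s := s.filter fun t => 0 < 1 - z t) (fun t => z t ≤ 0),
    filter_filter, filter_filter]
  congr 2 <;> refine filter_congr fun t _ => ?_
  · exact ⟨fun h => ⟨by linarith, h⟩, And.right⟩
  · rw [not_le, and_comm]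

theorem card_sub_sum_hinge_le {ι : Type*} {s V : Finset ι} (hV : V ⊆ s) (h : ι → ℝ) :
    (#V : ℝ) - ∑ t ∈ s, max (1 - h t) 0 ≤ ∑ t ∈ V, h t := by
  have hcard : (#V : ℝ) ≤ ∑ t ∈ V, max (1 - h t) 0 + ∑ t ∈ V, h t := by
    rw [← sum_add_distrib, card_eq_sum_ones, Nat.cast_sum, Nat.cast_one]
    exact sum_le_sum fun t _ => by linarith [le_max_left (1 - h t) 0]
  have hsub : ∑ t ∈ V, max (1 - h t) 0 ≤ ∑ t ∈ s, max (1 - h t) 0 :=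
    sum_le_sum_of_subset_of_nonneg hV fun t _ _ => le_max_right _ _
  linarith

-- `p t` is the update condition `ℓ_t(w_t) > 0`; the analysis never looks at how it is decided.
structure SecondOrderRun {n : Type*} [DecidableEq n] (T : ℕ) (x : ℕ → n → ℝ) (y : ℕ → ℝ) (r : ℝ)
    (p : ℕ → Prop) (θ : ℕ → n → ℝ) (A : ℕ → Matrix n n ℝ) : Prop where
  theta_one : θ 1 = 0
  A_zero : A 0 = 1
  update : ∀ t ∈ Icc 1 T, p t →
    θ (t + 1) = θ t + y t • x t ∧ A t = A (t - 1) + r⁻¹ • vecMulVec (x t) (x t)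
  skip : ∀ t ∈ Icc 1 T, ¬ p t → θ (t + 1) = θ t ∧ A t = A (t - 1)

namespace SecondOrderRun

variable {n : Type*} [DecidableEq n] {T : ℕ} {x : ℕ → n → ℝ} {y : ℕ → ℝ} {r : ℝ}
  {p : ℕ → Prop} [DecidablePred p] {θ : ℕ → n → ℝ} {A : ℕ → Matrix n n ℝ}

theorem A_eq (run : SecondOrderRun T x y r p θ A) {t : ℕ} (ht : t ≤ T) :
    A t = 1 + ∑ s ∈ (Icc 1 t).filter p, r⁻¹ • vecMulVec (x s) (x s) := by
  have hsub := Icc_subset_Icc_right (a := 1) ht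
  rw [← run.A_zero]
  exact eq_add_sum_filter_Icc_of_step (fun s hs hps => (run.update s (hsub hs) hps).2)
    (fun s hs hps => (run.skip s (hsub hs) hps).2)

theorem posDef [Fintype n] (run : SecondOrderRun T x y r p θ A) (hr : 0 < r) {t : ℕ}
    (ht : t ≤ T) : (A t).PosDef := by
  rw [run.A_eq ht]
  refine PosDef.one.add_posSemidef (posSemidef_sum _ fun s _ => ?_)
  simpa using (posSemidef_vecMulVec_self_star (x s)).smul (inv_nonneg.mpr hr.le)

theorem theta_eq (run : SecondOrderRun T x y r p θ A) :
    θ (T + 1) = ∑ t ∈ (Icc 1 T).filter p, y t • x t := by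
  have h := eq_add_sum_filter_Icc_of_step (f := fun t => θ (t + 1)) (g := fun t => y t • x t)
    (fun t ht hp => by rw [Nat.sub_add_cancel (mem_Icc.1 ht).1]; exact (run.update t ht hp).1)
    (fun t ht hp => by rw [Nat.sub_add_cancel (mem_Icc.1 ht).1]; exact (run.skip t ht hp).1)
  simpa [run.theta_one] using h

theorem potential_le [Fintype n] (run : SecondOrderRun T x y r p θ A) (hr : 0 < r)
    (hy : ∀ t ∈ Icc 1 T, y t ^ 2 = 1) :
    θ (T + 1) ⬝ᵥ ((A T)⁻¹ *ᵥ θ (T + 1)) / r ≤ Real.log (A T).det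
      + ∑ t ∈ (Icc 1 T).filter p, (θ t ⬝ᵥ ((A (t - 1))⁻¹ *ᵥ x t))
        * (2 * r * y t - θ t ⬝ᵥ ((A (t - 1))⁻¹ *ᵥ x t))
        / (r * (r + x t ⬝ᵥ ((A (t - 1))⁻¹ *ᵥ x t))) := by
  have h := le_add_sum_filter_Icc_of_step
    (f := fun t => θ (t + 1) ⬝ᵥ ((A t)⁻¹ *ᵥ θ (t + 1)) / r - Real.log (A t).det)
    (fun t ht hp => by
      rw [Nat.sub_add_cancel (mem_Icc.1 ht).1, (run.update t ht hp).1, (run.update t ht hp).2]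
      exact (run.posDef hr (by grind)).dotProduct_inv_mulVec_rankOne_update_le hr (hy t ht) _ _)
    (fun t ht hp => by
      rw [Nat.sub_add_cancel (mem_Icc.1 ht).1, (run.skip t ht hp).1, (run.skip t ht hp).2])
  simp only [run.theta_one, run.A_zero, inv_one, one_mulVec, dotProduct_zero, zero_div, det_one,
    Real.log_one, sub_zero, zero_add] at h
  linarith

theorem mul_dotProduct_mulVec_eq [Fintype n] (run : SecondOrderRun T x y r p θ A)
    (hr : r ≠ 0) (u : n → ℝ) :
    r * (u ⬝ᵥ (A T *ᵥ u)) = r * ∑ i, u i ^ 2 + ∑ t ∈ (Icc 1 T).filter p, (u ⬝ᵥ x t) ^ 2 := by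
  rw [run.A_eq le_rfl]
  simp only [add_mulVec, one_mulVec, sum_mulVec, smul_mulVec, vecMulVec_mulVec, op_smul_eq_smul,
    dotProduct_add, dotProduct_sum, dotProduct_smul, smul_eq_mul, mul_add, mul_sum]
  congr 1
  · simp [dotProduct, sq, mul_sum]
  · refine sum_congr rfl fun t _ => ?_
    rw [dotProduct_comm (x t) u]
    field_simp

end SecondOrderRun

theorem stmt_18_general {d T : ℕ}
    (x : ℕ → Fin d → ℝ) (y : ℕ → ℝ)
    (hy : ∀ t ∈ Icc 1 T, y t = 1 ∨ y t = -1)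
    (r : ℝ) (hr : 0 < r)
    (θ : ℕ → Fin d → ℝ) (A Atil : ℕ → Matrix (Fin d) (Fin d) ℝ)
    (w : ℕ → Fin d → ℝ)
    (hθ1 : θ 1 = 0) (hA0 : A 0 = 1)
    (hAtil : ∀ t ∈ Icc 1 T,
      Atil t = A (t - 1) + (1 / r) • Matrix.vecMulVec (x t) (x t))
    (hupd : ∀ t ∈ Icc 1 T,
      if 0 < 1 - y t * (w t ⬝ᵥ x t) then
        θ (t + 1) = θ t + y t • x t ∧ A t = Atil t
      else
        θ (t + 1) = θ t ∧ A t = A (t - 1)) :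
    ∀ u : Fin d → ℝ,
      (((Icc 1 T).filter fun t => y t * (w t ⬝ᵥ x t) ≤ 0).card : ℝ)
        + (((Icc 1 T).filter fun t =>
            0 < y t * (w t ⬝ᵥ x t) ∧ 0 < 1 - y t * (w t ⬝ᵥ x t)).card : ℝ)
        - ∑ t ∈ Icc 1 T, max (1 - y t * (u ⬝ᵥ x t)) 0 ≤
      Real.sqrt (r * ∑ i, u i ^ 2
          + ∑ t ∈ (Icc 1 T).filter (fun t => 0 < 1 - y t * (w t ⬝ᵥ x t)),
              (u ⬝ᵥ x t) ^ 2)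
        * Real.sqrt (max 0 (Real.log (A T).det
            + ∑ t ∈ (Icc 1 T).filter (fun t => 0 < 1 - y t * (w t ⬝ᵥ x t)),
                (θ t ⬝ᵥ ((A (t - 1))⁻¹ *ᵥ x t))
                  * (2 * r * y t - θ t ⬝ᵥ ((A (t - 1))⁻¹ *ᵥ x t))
                  / (r * (r + x t ⬝ᵥ ((A (t - 1))⁻¹ *ᵥ x t))))) := by
  intro u
  have run : SecondOrderRun T x y r (fun t => 0 < 1 - y t * (w t ⬝ᵥ x t)) θ A :=
    { theta_one := hθ1
      A_zero := hA0
      update := fun t ht hp => by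
        have h := hupd t ht
        rwa [if_pos hp, hAtil t ht, one_div] at h
      skip := fun t ht hp => by
        have h := hupd t ht
        rwa [if_neg hp] at h }
  have hApos := run.posDef hr le_rfl
  have hy2 (t : ℕ) (ht : t ∈ Icc 1 T) : y t ^ 2 = 1 := by rcases hy t ht with h | h <;> simp [h]
  have huA := hApos.posSemidef.dotProduct_mulVec_self_nonneg u
  calc _ = (#((Icc 1 T).filter fun t => 0 < 1 - y t * (w t ⬝ᵥ x t)) : ℝ)
          - ∑ t ∈ Icc 1 T, max (1 - y t * (u ⬝ᵥ x t)) 0 := by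
        rw [← card_filter_nonpos_add_card_filter_margin, Nat.cast_add]
    _ ≤ u ⬝ᵥ θ (T + 1) := by
        rw [run.theta_eq, dotProduct_sum]
        simpa only [dotProduct_smul, smul_eq_mul] using card_sub_sum_hinge_le (filter_subset _ _) _
    _ ≤ √(u ⬝ᵥ (A T *ᵥ u)) * √(θ (T + 1) ⬝ᵥ ((A T)⁻¹ *ᵥ θ (T + 1))) :=
        hApos.dotProduct_le_sqrt_mul_sqrt _ _
    _ = √(r * (u ⬝ᵥ (A T *ᵥ u))) * √(θ (T + 1) ⬝ᵥ ((A T)⁻¹ *ᵥ θ (T + 1)) / r) := by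
        rw [← Real.sqrt_mul huA, ← Real.sqrt_mul (by positivity)]
        field_simp
    _ ≤ _ := by
        rw [run.mul_dotProduct_mulVec_eq hr.ne']
        gcongr
        exact le_max_of_le_right (run.potential_le hr hy2)

/-- mistake bound for the (aggressive) second-order
Perceptron/AROW-style algorithm.  The hinge loss is
`ℓ_t(w) = max (1 - y_t ⟨w, x_t⟩) 0`; `M` is the set of mistake steps,
`U` the set of margin-error steps, and `V = M ∪ U = {t : ℓ_t(w_t) > 0}`;
`m_t = θ_tᵀ A_{t-1}⁻¹ x_t` and `χ_t = x_tᵀ A_{t-1}⁻¹ x_t`. -/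
theorem stmt_18 {d T : ℕ} (hT : 1 ≤ T)
    (x : ℕ → Fin d → ℝ) (y : ℕ → ℝ)
    (hy : ∀ t ∈ Icc 1 T, y t = 1 ∨ y t = -1)
    (r : ℝ) (hr : 0 < r)
    (θ : ℕ → Fin d → ℝ) (A Atil : ℕ → Matrix (Fin d) (Fin d) ℝ)
    (w : ℕ → Fin d → ℝ)
    (hθ1 : θ 1 = 0) (hA0 : A 0 = 1)
    (hAtil : ∀ t ∈ Icc 1 T,
      Atil t = A (t - 1) + (1 / r) • Matrix.vecMulVec (x t) (x t))
    (hw : ∀ t ∈ Icc 1 T, w t = (Atil t)⁻¹ *ᵥ θ t)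
    (hupd : ∀ t ∈ Icc 1 T,
      if 0 < 1 - y t * (w t ⬝ᵥ x t) then
        θ (t + 1) = θ t + y t • x t ∧ A t = Atil t
      else
        θ (t + 1) = θ t ∧ A t = A (t - 1)) :
    ∀ u : Fin d → ℝ,
      (((Icc 1 T).filter fun t => y t * (w t ⬝ᵥ x t) ≤ 0).card : ℝ)
        + (((Icc 1 T).filter fun t =>
            0 < y t * (w t ⬝ᵥ x t) ∧ 0 < 1 - y t * (w t ⬝ᵥ x t)).card : ℝ)
        - ∑ t ∈ Icc 1 T, max (1 - y t * (u ⬝ᵥ x t)) 0 ≤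
      Real.sqrt (r * ∑ i, u i ^ 2
          + ∑ t ∈ (Icc 1 T).filter (fun t => 0 < 1 - y t * (w t ⬝ᵥ x t)),
              (u ⬝ᵥ x t) ^ 2)
        * Real.sqrt (max 0 (Real.log (A T).det
            + ∑ t ∈ (Icc 1 T).filter (fun t => 0 < 1 - y t * (w t ⬝ᵥ x t)),
                (θ t ⬝ᵥ ((A (t - 1))⁻¹ *ᵥ x t))
                  * (2 * r * y t - θ t ⬝ᵥ ((A (t - 1))⁻¹ *ᵥ x t))
                  / (r * (r + x t ⬝ᵥ ((A (t - 1))⁻¹ *ᵥ x t))))) :=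
  stmt_18_general x y hy r hr θ A Atil w hθ1 hA0 hAtil hupd
end
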